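/- arXiv:1912.01688 — 7 statements merged into one kernel-verified Lean document; each statement's English description precedes it below -/
import Mathlib

section
/- Let t be a strictly increasing sequence of elements of [n] with complement u (in increasing order). For all i in [m] and j in [n-m], we have j ≥ t_i - i + 1 if and only if u_j ≥ j + i. -/
/-! Put `x = i + j - 1 < n`. Since `t` and `u` enumerate complementary subsets of `[n]`, the
number of `t`'s that are `≤ x` plus the number of `u`'s that are `≤ x` is `x`. By monotonicity,
`t i ≤ x` iff at least `i` of the `t`'s are `≤ x`, and likewise for `u j`. Hence `t i ≤ x` iff
fewer than `j` of the `u`'s are `≤ x`, i.e. iff `u j > x`. -/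

open Finset

theorem StrictMonoOn.le_card_filter_Icc_iff {α : Type*} [LinearOrder α] {f : ℕ → α} {k i : ℕ}
    (hf : StrictMonoOn f (Set.Icc 1 k)) (hi : i ∈ Set.Icc 1 k) (x : α) :
    i ≤ #{a ∈ Icc 1 k | f a ≤ x} ↔ f i ≤ x := by
  constructor
  · intro hcard
    by_contra! hxi
    have hsub : {a ∈ Icc 1 k | f a ≤ x} ⊆ Icc 1 (i - 1) := by
      intro a ha
      rw [mem_filter, mem_Icc] at ha
      have hai : a < i := (hf.lt_iff_lt ⟨ha.1.1, ha.1.2⟩ hi).mp (ha.2.trans_lt hxi)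
      rw [mem_Icc]
      omega
    have := card_le_card hsub
    rw [Nat.card_Icc] at this
    have := hi.1
    omega
  · intro hix
    have hsub : Icc 1 i ⊆ {a ∈ Icc 1 k | f a ≤ x} := by
      intro a ha
      rw [mem_Icc] at ha
      have hak : a ∈ Set.Icc 1 k := ⟨ha.1, ha.2.trans hi.2⟩
      exact mem_filter.mpr ⟨mem_Icc.mpr hak, ((hf.le_iff_le hak hi).mpr ha.2).trans hix⟩
    simpa using card_le_card hsub

theorem card_filter_le_add_card_filter_le {A B : Finset ℕ} {n : ℕ} (hAB : Disjoint A B)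
    (hunion : A ∪ B = Icc 1 n) {x : ℕ} (hx : x ≤ n) :
    #{a ∈ A | a ≤ x} + #{b ∈ B | b ≤ x} = x := by
  have hIcc : {y ∈ Icc 1 n | y ≤ x} = Icc 1 x := by
    ext y
    simp only [mem_filter, mem_Icc]
    omega
  rw [← card_union_of_disjoint (disjoint_filter_filter hAB), ← filter_union, hunion, hIcc,
    Nat.card_Icc, Nat.add_sub_cancel]

theorem card_filter_Icc_eq_card_filter_image {α : Type*} [LinearOrder α] {f : ℕ → α} {k : ℕ}
    (hf : Set.InjOn f (Icc 1 k)) (x : α) :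
    #{a ∈ Icc 1 k | f a ≤ x} = #{y ∈ (Icc 1 k).image f | y ≤ x} := by
  rw [filter_image, card_image_of_injOn (hf.mono (filter_subset _ _))]

section Complement

variable {t u : ℕ → ℕ} {m l n : ℕ}

theorem disjoint_image_Icc_of_compl
    (hcompl : ∀ x ∈ Icc 1 n,
      (∃ i, 1 ≤ i ∧ i ≤ m ∧ t i = x) ↔ ¬ ∃ j, 1 ≤ j ∧ j ≤ l ∧ u j = x)
    (ht_mem : ∀ i, 1 ≤ i → i ≤ m → t i ∈ Icc 1 n) :
    Disjoint ((Icc 1 m).image t) ((Icc 1 l).image u) := by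
  simp only [disjoint_left, mem_image, mem_Icc, and_assoc]
  rintro _ ⟨i, hi1, him, rfl⟩
  exact (hcompl _ (ht_mem i hi1 him)).mp ⟨i, hi1, him, rfl⟩

theorem image_Icc_union_image_Icc_of_compl
    (hcompl : ∀ x ∈ Icc 1 n,
      (∃ i, 1 ≤ i ∧ i ≤ m ∧ t i = x) ↔ ¬ ∃ j, 1 ≤ j ∧ j ≤ l ∧ u j = x)
    (ht_mem : ∀ i, 1 ≤ i → i ≤ m → t i ∈ Icc 1 n)
    (hu_mem : ∀ j, 1 ≤ j → j ≤ l → u j ∈ Icc 1 n) :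
    (Icc 1 m).image t ∪ (Icc 1 l).image u = Icc 1 n := by
  refine Subset.antisymm (union_subset ?_ ?_) fun x hx => ?_
  · exact image_subset_iff.mpr fun i hi => ht_mem i (mem_Icc.mp hi).1 (mem_Icc.mp hi).2
  · exact image_subset_iff.mpr fun j hj => hu_mem j (mem_Icc.mp hj).1 (mem_Icc.mp hj).2
  · simp only [mem_union, mem_image, mem_Icc, and_assoc]
    exact or_iff_not_imp_right.mpr (hcompl x hx).mpr

end Complement

/-- Lemma 4.1(2): with `t` the strictly increasing list of taken spots in `[n]`
(1-indexed) and `u` the increasing enumeration of `[n] \ {t 1, …, t m}`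
(1-indexed), for all `i ∈ [m]` and `j ∈ [n-m]` we have
`j ≥ t i - i + 1 ↔ u j ≥ j + i`. -/
theorem stmt1 (n m : ℕ) (t u : ℕ → ℕ)
    (ht_mono : ∀ i j, 1 ≤ i → i < j → j ≤ m → t i < t j)
    (ht_mem : ∀ i, 1 ≤ i → i ≤ m → t i ∈ Finset.Icc 1 n)
    (hu_mono : ∀ i j, 1 ≤ i → i < j → j ≤ n - m → u i < u j)
    (hu_mem : ∀ j, 1 ≤ j → j ≤ n - m → u j ∈ Finset.Icc 1 n)
    (hcompl : ∀ x ∈ Finset.Icc 1 n,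
      (∃ i, 1 ≤ i ∧ i ≤ m ∧ t i = x) ↔ ¬ ∃ j, 1 ≤ j ∧ j ≤ n - m ∧ u j = x) :
    ∀ i, 1 ≤ i → i ≤ m → ∀ j, 1 ≤ j → j ≤ n - m →
      (t i - i + 1 ≤ j ↔ j + i ≤ u j) := by
  intro i hi1 him j hj1 hjm
  have ht : StrictMonoOn t (Set.Icc 1 m) := fun a ha b hb hab => ht_mono a b ha.1 hab hb.2
  have hu : StrictMonoOn u (Set.Icc 1 (n - m)) := fun a ha b hb hab => hu_mono a b ha.1 hab hb.2
  have hcount : #{a ∈ Icc 1 m | t a ≤ j + i - 1} + #{b ∈ Icc 1 (n - m) | u b ≤ j + i - 1}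
      = j + i - 1 := by
    rw [card_filter_Icc_eq_card_filter_image (by simpa using ht.injOn),
      card_filter_Icc_eq_card_filter_image (by simpa using hu.injOn)]
    exact card_filter_le_add_card_filter_le (disjoint_image_Icc_of_compl hcompl ht_mem)
      (image_Icc_union_image_Icc_of_compl hcompl ht_mem hu_mem) (by omega)
  have hti := ht.le_card_filter_Icc_iff ⟨hi1, him⟩ (j + i - 1)
  have huj := hu.le_card_filter_Icc_iff ⟨hj1, hjm⟩ (j + i - 1)
  -- `t i - i + 1 ≤ j ↔ t i ≤ j + i - 1` survives truncation of `t i - i` because `1 ≤ j`.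
  omega
end

section
/- A weakly increasing sequence (c_1,...,c_{n-m}) in [n]^{n-m} is an increasing parking completion of t if and only if c_i ≤ u_i for all i, where u is the increasing enumeration of the complement of t in [n]. -/
/-!
For a weakly increasing `b : Fin n → ℕ`, the parking condition `b i ≤ i + 1` is equivalent to
`k ≤ #{i | b i ≤ k}` for every `k ≤ n`. For the rearrangement of `t ++ c` this count is the
count for `t` plus the count for `c`, while the counts for `t` and for `u` add up to `k` because
`t` and `u` partition `[n]`. So the parking condition says that `c` has at every level at least
as many entries as `u`, which for two weakly increasing sequences means `c i ≤ u i`.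
-/

open Finset

def countLE {k : ℕ} (f : Fin k → ℕ) (v : ℕ) : ℕ := #{i | f i ≤ v}

section countLE

variable {k l : ℕ}

theorem countLE_comp_equiv (e : Fin k ≃ Fin l) (f : Fin l → ℕ) (v : ℕ) :
    countLE (f ∘ e) v = countLE f v := by
  simp only [countLE, card_filter]
  exact Fintype.sum_equiv e _ _ fun _ => rfl

theorem countLE_append (t : Fin k → ℕ) (c : Fin l → ℕ) (v : ℕ) :
    countLE (Fin.append t c) v = countLE t v + countLE c v := by
  simp only [countLE, card_filter, Fin.sum_univ_add, Fin.append_left, Fin.append_right]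

theorem countLE_eq_card_filter_mem_range {f : Fin k → ℕ} (hf : Function.Injective f)
    (hpos : ∀ i, 1 ≤ f i) (v : ℕ) :
    countLE f v = #{x ∈ Icc 1 v | ∃ i, f i = x} := by
  rw [countLE, ← card_image_of_injective _ hf]
  congr 1
  ext x
  simp only [mem_image, mem_filter, mem_univ, true_and, mem_Icc]
  constructor
  · rintro ⟨i, hi, rfl⟩
    exact ⟨⟨hpos i, hi⟩, i, rfl⟩
  · rintro ⟨⟨-, hx⟩, i, rfl⟩
    exact ⟨i, hx, rfl⟩

theorem le_countLE_of_forall_le_succ {b : Fin k → ℕ} (hb : ∀ i : Fin k, b i ≤ i + 1)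
    {v : ℕ} (hv : v ≤ k) : v ≤ countLE b v := by
  calc v = #{i : Fin k | i < v} := by rw [Fin.card_filter_val_lt, min_eq_right hv]
    _ ≤ countLE b v := card_le_card fun i hi => by
      simp only [mem_filter, mem_univ, true_and] at hi ⊢
      exact (hb i).trans hi

theorem Monotone.apply_le_iff_lt_countLE {b : Fin k → ℕ} (hb : Monotone b) (i : Fin k)
    (v : ℕ) : b i ≤ v ↔ i < countLE b v := by
  constructor
  · intro hi
    calc (i : ℕ) < #(Iic i) := by rw [Fin.card_Iic]; omega
      _ ≤ countLE b v := card_le_card fun j hj => by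
        simp only [mem_Iic, mem_filter, mem_univ, true_and] at hj ⊢
        exact (hb hj).trans hi
  · intro hi
    by_contra! hvi
    have : countLE b v ≤ #(Iio i) := card_le_card fun j hj => by
      simp only [mem_Iio, mem_filter, mem_univ, true_and] at hj ⊢
      by_contra! hij
      exact absurd (hb hij) (by omega)
    rw [Fin.card_Iio] at this
    omega

theorem Monotone.forall_le_succ_iff {b : Fin k → ℕ} (hb : Monotone b) :
    (∀ i : Fin k, b i ≤ i + 1) ↔ ∀ v ≤ k, v ≤ countLE b v := by
  refine ⟨fun h v hv => le_countLE_of_forall_le_succ h hv, fun h i => ?_⟩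
  exact (hb.apply_le_iff_lt_countLE i _).2 (h _ i.2)

theorem Monotone.forall_le_iff_countLE_le {u c : Fin k → ℕ} (hu : Monotone u)
    (hc : Monotone c) {n : ℕ} (hun : ∀ i, u i ≤ n) :
    (∀ v ≤ n, countLE u v ≤ countLE c v) ↔ ∀ i, c i ≤ u i := by
  refine ⟨fun h i => ?_, fun h v _ => card_le_card fun i hi => ?_⟩
  · rw [hc.apply_le_iff_lt_countLE]
    exact ((hu.apply_le_iff_lt_countLE i _).1 le_rfl).trans_le (h _ (hun i))
  · simp only [mem_filter, mem_univ, true_and] at hi ⊢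
    exact (h i).trans hi


theorem countLE_add_countLE_of_isCompl {n : ℕ} {t : Fin k → ℕ} {u : Fin l → ℕ}
    (ht : Function.Injective t) (htm : ∀ i, t i ∈ Icc 1 n)
    (hu : Function.Injective u) (hum : ∀ j, u j ∈ Icc 1 n)
    (hcompl : ∀ x ∈ Icc 1 n, (∃ i, t i = x) ↔ ¬ ∃ j, u j = x) {v : ℕ} (hv : v ≤ n) :
    countLE t v + countLE u v = v := by
  rw [countLE_eq_card_filter_mem_range ht (fun i => (mem_Icc.1 (htm i)).1),
    countLE_eq_card_filter_mem_range hu (fun j => (mem_Icc.1 (hum j)).1)]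
  have hu_iff : ∀ x ∈ Icc 1 v, (∃ j, u j = x) ↔ ¬ ∃ i, t i = x := fun x hx => by
    rw [hcompl x (Icc_subset_Icc_right hv hx), not_not]
  rw [filter_congr hu_iff, card_filter_add_card_filter_not, Nat.card_Icc,
    Nat.add_sub_cancel]

end countLE

theorem forall_append_comp_le_succ_iff {n m p : ℕ} (e : Fin n ≃ Fin (m + p))
    {t : Fin m → ℕ} {u c : Fin p → ℕ}
    (ht : Function.Injective t) (htm : ∀ i, t i ∈ Icc 1 n)
    (hu : StrictMono u) (hum : ∀ j, u j ∈ Icc 1 n)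
    (hcompl : ∀ x ∈ Icc 1 n, (∃ i, t i = x) ↔ ¬ ∃ j, u j = x) (hc : Monotone c)
    {σ : Equiv.Perm (Fin n)} (hσ : Monotone (Fin.append t c ∘ e ∘ σ)) :
    (∀ i : Fin n, (Fin.append t c ∘ e ∘ σ) i ≤ i + 1) ↔ ∀ i, c i ≤ u i := by
  have hcount : ∀ v, countLE (Fin.append t c ∘ e ∘ σ) v = countLE t v + countLE c v :=
    fun v => by
      rw [← Function.comp_assoc, countLE_comp_equiv σ, countLE_comp_equiv e, countLE_append]
  rw [hσ.forall_le_succ_iff,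
    ← hu.monotone.forall_le_iff_countLE_le hc fun j => (mem_Icc.1 (hum j)).2]
  refine forall₂_congr fun v hv => ?_
  have := countLE_add_countLE_of_isCompl ht htm hu.injective hum hcompl hv
  rw [hcount]
  omega

/-- A weakly increasing sequence `c ∈ [n]^{n-m}` is an increasing parking
completion of the strictly increasing sequence `t` (i.e. the concatenation of
`t` and `c` has a weakly increasing rearrangement `b` with `b i ≤ i`, making it
a parking function) if and only if `c i ≤ u i` for all `i`, where `u` is the
increasing enumeration of `[n] \ {t i}`. -/
theorem stmt2 (n m : ℕ) (hmn : m ≤ n) (t : Fin m → ℕ) (u : Fin (n - m) → ℕ)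
    (ht : StrictMono t) (htm : ∀ i, t i ∈ Finset.Icc 1 n)
    (hu : StrictMono u) (hum : ∀ j, u j ∈ Finset.Icc 1 n)
    (hcompl : ∀ x ∈ Finset.Icc 1 n, (∃ i, t i = x) ↔ ¬ ∃ j, u j = x)
    (c : Fin (n - m) → ℕ) (hc : Monotone c) :
    (∃ σ : Equiv.Perm (Fin n),
        Monotone ((fun i : Fin n =>
          Fin.append t c (Fin.cast (by omega : n = m + (n - m)) i)) ∘ σ) ∧
        ∀ i : Fin n,
          Fin.append t c (Fin.cast (by omega : n = m + (n - m)) (σ i)) ≤ i.1 + 1) ↔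
      ∀ i, c i ≤ u i := by
  have hn : n = m + (n - m) := by omega
  have key := fun σ =>
    forall_append_comp_le_succ_iff (finCongr hn) ht.injective htm hu hum hcompl hc (σ := σ)
  refine ⟨fun ⟨σ, hσ, hbound⟩ => (key σ hσ).1 hbound, fun hcu => ?_⟩
  let a := Fin.append t c ∘ finCongr hn
  exact ⟨Tuple.sort a, Tuple.monotone_sort a, (key _ (Tuple.monotone_sort a)).2 hcu⟩
end

section
/- The maps Join and Split are mutually inverse bijections between the set of finite lists of increasing parking functions and the set of finite weakly increasing sequences of positive integers. -/
/-- An increasing parking function: a weakly increasing list `a` with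
`1 ≤ a i ≤ i` (1-indexed). -/
def IsIPF (a : List ℕ) : Prop :=
  a.Pairwise (· ≤ ·) ∧ ∀ i (h : i < a.length), 1 ≤ a.get ⟨i, h⟩ ∧ a.get ⟨i, h⟩ ≤ i + 1

/-- `Join`: concatenate a list of (increasing) parking functions, shifting the
`i`-th block up by `L (i-1) + i - 1`. -/
def Join : List (List ℕ) → List ℕ
  | [] => []
  | a :: A => a ++ (Join A).map (· + (a.length + 1))

open Classical in
/-- Fuel-driven implementation of `Split`: repeatedly remove the longest prefix
that is an increasing parking function and shift the remainder down by
(length of prefix) + 1.  On weakly increasing lists of positive integers the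
fuel `p.sum + 1` used in `Split` always suffices. -/
noncomputable def SplitAux : ℕ → List ℕ → List (List ℕ)
  | 0, _ => []
  | fuel + 1, p =>
    if p = [] then []
    else
      let k := Nat.findGreatest (fun k => IsIPF (p.take k)) p.length
      let q := p.drop k
      if q = [] then [p.take k]
      else p.take k :: SplitAux fuel (q.map (· - (k + 1)))

/-- `Split`, the inverse of `Join`. -/
noncomputable def Split (p : List ℕ) : List (List ℕ) :=
  SplitAux (p.sum + 1) p

/-! If `a` is the longest IPF prefix of a weakly increasing positive sequence `p = a ++ q`, then
every entry of `q` is at least `|a| + 2`: otherwise its first entry would extend `a` to a longer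
IPF. Hence `q ⊖ (|a| + 1)` is again weakly increasing and positive, with smaller sum (which is
why the fuel `p.sum + 1` suffices), and `Join` undoes the step. Conversely, every block that
`Join` appends after an IPF `a` starts at `|a| + 2` or more, so the longest IPF prefix of the
joined sequence is exactly `a`, and `Split` undoes `Join`. -/

theorem isIPF_nil : IsIPF [] :=
  ⟨List.Pairwise.nil, fun _ h => absurd h (Nat.not_lt_zero _)⟩

theorem IsIPF.getElem_le {a : List ℕ} (ha : IsIPF a) {i : ℕ} (hi : i < a.length) :
    a[i] ≤ i + 1 :=
  (ha.2 i hi).2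

theorem IsIPF.one_le_of_mem {a : List ℕ} (ha : IsIPF a) {x : ℕ} (hx : x ∈ a) : 1 ≤ x := by
  obtain ⟨i, hi, rfl⟩ := List.getElem_of_mem hx
  exact (ha.2 i hi).1

theorem IsIPF.le_length_of_mem {a : List ℕ} (ha : IsIPF a) {x : ℕ} (hx : x ∈ a) :
    x ≤ a.length := by
  obtain ⟨i, hi, rfl⟩ := List.getElem_of_mem hx
  exact (ha.getElem_le hi).trans hi

theorem IsIPF.append_singleton {a : List ℕ} (ha : IsIPF a) {y : ℕ} (hle : ∀ x ∈ a, x ≤ y)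
    (hy₁ : 1 ≤ y) (hy : y ≤ a.length + 1) : IsIPF (a ++ [y]) := by
  refine ⟨List.pairwise_append.2 ⟨ha.1, List.pairwise_singleton _ _, ?_⟩, fun i hi => ?_⟩
  · intro x hx z hz
    rw [List.mem_singleton.1 hz]
    exact hle x hx
  · rw [List.length_append, List.length_singleton] at hi
    simp only [List.get_eq_getElem]
    rcases Nat.lt_or_ge i a.length with h | h
    · rw [List.getElem_append_left h]
      exact ha.2 i h
    · obtain rfl : i = a.length := by omega
      simpa using ⟨hy₁, hy⟩

section PrefixLength

open Classical

noncomputable def ipfPrefixLength (p : List ℕ) : ℕ :=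
  Nat.findGreatest (fun k => IsIPF (p.take k)) p.length

theorem ipfPrefixLength_le_length (p : List ℕ) : ipfPrefixLength p ≤ p.length :=
  Nat.findGreatest_le _

theorem isIPF_take_ipfPrefixLength (p : List ℕ) : IsIPF (p.take (ipfPrefixLength p)) :=
  Nat.findGreatest_spec (P := fun k => IsIPF (p.take k)) (Nat.zero_le _) (by simpa using isIPF_nil)

theorem add_two_le_of_mem_drop_ipfPrefixLength {p : List ℕ} (hs : p.Pairwise (· ≤ ·))
    (hpos : ∀ x ∈ p, 1 ≤ x) {x : ℕ} (hx : x ∈ p.drop (ipfPrefixLength p)) :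
    ipfPrefixLength p + 2 ≤ x := by
  set k := ipfPrefixLength p
  have hk : k < p.length := by
    by_contra h
    simp [List.drop_eq_nil_iff.2 (not_lt.1 h)] at hx
  have hdrop := List.drop_eq_getElem_cons hk
  have hcross : ∀ y ∈ p.take k, ∀ z ∈ p.drop k, y ≤ z :=
    (List.pairwise_append.1 ((List.take_append_drop k p).symm ▸ hs)).2.2
  have hpk : k + 2 ≤ p[k] := by
    by_contra! hlt
    have hipf : IsIPF (p.take (k + 1)) := by
      rw [← List.take_concat_get' p k hk]
      refine (isIPF_take_ipfPrefixLength p).append_singleton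
        (fun y hy => hcross y hy _ (hdrop ▸ List.mem_cons_self)) (hpos _ (List.getElem_mem _)) ?_
      rw [List.length_take_of_le hk.le]
      omega
    exact Nat.findGreatest_is_greatest (Nat.lt_succ_self k) hk hipf
  have hsd : (p.drop k).Pairwise (· ≤ ·) := hs.sublist (List.drop_sublist _ _)
  rw [hdrop] at hx hsd
  rcases List.mem_cons.1 hx with rfl | hx
  · exact hpk
  · exact hpk.trans (List.rel_of_pairwise_cons hsd hx)

theorem ipfPrefixLength_append {a b : List ℕ} (ha : IsIPF a) (hb : ∀ x ∈ b, a.length + 2 ≤ x) :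
    ipfPrefixLength (a ++ b) = a.length := by
  refine le_antisymm ?_ (Nat.le_findGreatest (by simp) (by rwa [List.take_left]))
  by_contra! hlt
  have hk := ipfPrefixLength_le_length (a ++ b)
  rw [List.length_append] at hk
  have hb₀ : 0 < b.length := by omega
  have hle := (isIPF_take_ipfPrefixLength (a ++ b)).getElem_le (i := a.length)
    (by rw [List.length_take, List.length_append]; omega)
  simp only [List.getElem_take, List.getElem_append_right le_rfl, Nat.sub_self] at hle
  have := hb _ (List.getElem_mem hb₀)
  omega

end PrefixLength

theorem sum_map_sub_lt {q : List ℕ} {c : ℕ} (hq : q ≠ []) (hc : 0 < c) (hpos : ∀ x ∈ q, 0 < x) :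
    (q.map (· - c)).sum < q.sum := by
  obtain ⟨x, hx⟩ := List.exists_mem_of_ne_nil q hq
  simpa using List.sum_lt_sum (l := q) (· - c) id (fun x _ => Nat.sub_le x c)
    ⟨x, hx, Nat.sub_lt (hpos x hx) hc⟩

-- The remainder `q ⊖ (|a| + 1)` after removing the longest IPF prefix `a` from `p = a ++ q`.
noncomputable def splitRest (p : List ℕ) : List ℕ :=
  (p.drop (ipfPrefixLength p)).map (· - (ipfPrefixLength p + 1))

theorem take_ipfPrefixLength_of_splitRest_eq_nil {p : List ℕ} (h : splitRest p = []) :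
    p.take (ipfPrefixLength p) = p := by
  rw [splitRest, List.map_eq_nil_iff, List.drop_eq_nil_iff] at h
  exact List.take_of_length_le h

theorem pairwise_splitRest {p : List ℕ} (hs : p.Pairwise (· ≤ ·)) :
    (splitRest p).Pairwise (· ≤ ·) :=
  (hs.sublist (List.drop_sublist _ _)).map _ fun _ _ h => Nat.sub_le_sub_right h _

theorem one_le_of_mem_splitRest {p : List ℕ} (hs : p.Pairwise (· ≤ ·)) (hpos : ∀ x ∈ p, 1 ≤ x)
    (x : ℕ) (hx : x ∈ splitRest p) : 1 ≤ x := by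
  obtain ⟨y, hy, rfl⟩ := List.mem_map.1 hx
  have := add_two_le_of_mem_drop_ipfPrefixLength hs hpos hy
  omega

theorem sum_splitRest_lt {p : List ℕ} (hs : p.Pairwise (· ≤ ·)) (hpos : ∀ x ∈ p, 1 ≤ x)
    (h : splitRest p ≠ []) : (splitRest p).sum < p.sum :=
  calc (splitRest p).sum < (p.drop (ipfPrefixLength p)).sum :=
        sum_map_sub_lt (by simpa [splitRest] using h) (Nat.succ_pos _) fun x hx => by
          have := add_two_le_of_mem_drop_ipfPrefixLength hs hpos hx
          omega
    _ ≤ p.sum := (List.drop_sublist _ _).sum_le_sum fun _ _ => Nat.zero_le _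

theorem take_append_map_splitRest {p : List ℕ} (hs : p.Pairwise (· ≤ ·))
    (hpos : ∀ x ∈ p, 1 ≤ x) :
    p.take (ipfPrefixLength p) ++ (splitRest p).map (· + (ipfPrefixLength p + 1)) = p := by
  conv_rhs => rw [← List.take_append_drop (ipfPrefixLength p) p]
  rw [splitRest, List.map_map]
  congr 1
  conv_rhs => rw [← List.map_id (p.drop _)]
  refine List.map_congr_left fun x hx => Nat.sub_add_cancel ?_
  have := add_two_le_of_mem_drop_ipfPrefixLength hs hpos hx
  omega

theorem splitAux_succ {p : List ℕ} (hp : p ≠ []) (f : ℕ) :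
    SplitAux (f + 1) p = if splitRest p = [] then [p]
      else p.take (ipfPrefixLength p) :: SplitAux f (splitRest p) := by
  rw [SplitAux, if_neg hp]
  by_cases h : splitRest p = []
  · have htake := take_ipfPrefixLength_of_splitRest_eq_nil h
    rw [if_pos h]
    simp only [splitRest, ipfPrefixLength, List.map_eq_nil_iff] at h htake ⊢
    simp only [h, htake, if_true]
  · simp only [splitRest, ipfPrefixLength, List.map_eq_nil_iff] at h ⊢
    simp only [h, if_false]

theorem splitAux_ne_nil {p : List ℕ} (hp : p ≠ []) (f : ℕ) : SplitAux (f + 1) p ≠ [] := by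
  rw [splitAux_succ hp]
  split_ifs <;> simp

theorem isIPF_of_mem_splitAux : ∀ {f : ℕ} {p a : List ℕ}, a ∈ SplitAux f p → IsIPF a
  | 0, _, _, h => by simp [SplitAux] at h
  | f + 1, p, a, h => by
    by_cases hp : p = []
    · simp [SplitAux, hp] at h
    rw [splitAux_succ hp] at h
    split_ifs at h with hr
    · rw [List.mem_singleton.1 h, ← take_ipfPrefixLength_of_splitRest_eq_nil hr]
      exact isIPF_take_ipfPrefixLength p
    · rcases List.mem_cons.1 h with rfl | h
      · exact isIPF_take_ipfPrefixLength p
      · exact isIPF_of_mem_splitAux h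

theorem getLast?_splitAux_ne : ∀ {f : ℕ} {p : List ℕ}, p.Pairwise (· ≤ ·) → (∀ x ∈ p, 1 ≤ x) →
    p.sum < f → (SplitAux f p).getLast? ≠ some []
  | 0, _, _, _, hf => absurd hf (Nat.not_lt_zero _)
  | f + 1, p, hs, hpos, hf => by
    by_cases hp : p = []
    · simp [SplitAux, hp]
    rw [splitAux_succ hp]
    split_ifs with hr
    · simpa using hp
    · have hlt := sum_splitRest_lt hs hpos hr
      obtain ⟨f, rfl⟩ : ∃ f', f = f' + 1 := ⟨f - 1, by omega⟩
      rw [List.getLast?_cons_of_ne_nil (splitAux_ne_nil hr f)]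
      exact getLast?_splitAux_ne (pairwise_splitRest hs) (one_le_of_mem_splitRest hs hpos)
        (by omega)

theorem join_splitAux : ∀ {f : ℕ} {p : List ℕ}, p.Pairwise (· ≤ ·) → (∀ x ∈ p, 1 ≤ x) →
    p.sum < f → Join (SplitAux f p) = p
  | 0, _, _, _, hf => absurd hf (Nat.not_lt_zero _)
  | f + 1, p, hs, hpos, hf => by
    by_cases hp : p = []
    · simp [SplitAux, Join, hp]
    rw [splitAux_succ hp]
    split_ifs with hr
    · simp [Join]
    · have hlt := sum_splitRest_lt hs hpos hr
      rw [Join, join_splitAux (pairwise_splitRest hs) (one_le_of_mem_splitRest hs hpos)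
        (by omega), List.length_take_of_le (ipfPrefixLength_le_length p)]
      exact take_append_map_splitRest hs hpos

theorem one_le_of_mem_join : ∀ {A : List (List ℕ)}, (∀ a ∈ A, IsIPF a) → ∀ x ∈ Join A, 1 ≤ x
  | [], _, x, hx => by simp [Join] at hx
  | a :: A, hA, x, hx => by
    rw [Join, List.mem_append] at hx
    rcases hx with hx | hx
    · exact (hA a List.mem_cons_self).one_le_of_mem hx
    · obtain ⟨y, -, rfl⟩ := List.mem_map.1 hx
      omega

theorem add_one_le_of_mem_map_join {A : List (List ℕ)} (hA : ∀ a ∈ A, IsIPF a) (c : ℕ) :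
    ∀ x ∈ (Join A).map (· + c), c + 1 ≤ x := by
  intro x hx
  obtain ⟨y, hy, rfl⟩ := List.mem_map.1 hx
  have := one_le_of_mem_join hA y hy
  omega

theorem pairwise_join : ∀ {A : List (List ℕ)}, (∀ a ∈ A, IsIPF a) → (Join A).Pairwise (· ≤ ·)
  | [], _ => List.Pairwise.nil
  | a :: A, hA => by
    have ha := hA a List.mem_cons_self
    have hA' : ∀ b ∈ A, IsIPF b := fun b hb => hA b (List.mem_cons_of_mem a hb)
    refine List.pairwise_append.2 ⟨ha.1, ?_, fun x hx y hy => ?_⟩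
    · exact (pairwise_join hA').map _ fun _ _ h => Nat.add_le_add_right h _
    · have := ha.le_length_of_mem hx
      have := add_one_le_of_mem_map_join hA' _ y hy
      omega

theorem join_eq_nil_iff {A : List (List ℕ)} : Join A = [] ↔ ∀ a ∈ A, a = [] := by
  induction A with
  | nil => simp [Join]
  | cons a A ih => simp [Join, ih]

theorem join_ne_nil {A : List (List ℕ)} (hA : A ≠ []) (hlast : A.getLast? ≠ some []) :
    Join A ≠ [] := by
  refine fun h => hlast ?_
  rw [List.getLast?_eq_some_getLast hA, join_eq_nil_iff.1 h _ (List.getLast_mem hA)]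

theorem splitRest_append {a b : List ℕ} (ha : IsIPF a) (hb : ∀ x ∈ b, a.length + 2 ≤ x) :
    splitRest (a ++ b) = b.map (· - (a.length + 1)) := by
  rw [splitRest, ipfPrefixLength_append ha hb, List.drop_left]

theorem splitAux_join : ∀ {f : ℕ} {A : List (List ℕ)}, (∀ a ∈ A, IsIPF a) →
    A.getLast? ≠ some [] → (Join A).sum < f → SplitAux f (Join A) = A
  | f, [], _, _, _ => by cases f <;> simp [SplitAux, Join]
  | 0, _ :: _, _, _, hf => absurd hf (Nat.not_lt_zero _)
  | f + 1, [a], hA, hlast, _ => by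
    have hne : a ≠ [] := by simpa using hlast
    have hrest : splitRest a = [] := by
      simpa using splitRest_append (hA a List.mem_cons_self) (b := []) (by simp)
    simp [Join, splitAux_succ hne, hrest]
  | f + 1, a :: b :: B, hA, hlast, hf => by
    set A := b :: B
    have ha := hA a List.mem_cons_self
    have hA' : ∀ c ∈ A, IsIPF c := fun c hc => hA c (List.mem_cons_of_mem a hc)
    have hlast' : A.getLast? ≠ some [] := by rwa [List.getLast?_cons_cons] at hlast
    have hJ : Join A ≠ [] := join_ne_nil (List.cons_ne_nil b B) hlast'
    have hshift : ∀ x ∈ (Join A).map (· + (a.length + 1)), a.length + 2 ≤ x :=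
      add_one_le_of_mem_map_join hA' _
    have hrest : splitRest (Join (a :: A)) = Join A := by
      rw [Join, splitRest_append ha hshift]
      simp [List.map_map, Function.comp_def]
    have hlt := sum_splitRest_lt (pairwise_join hA) (one_le_of_mem_join hA) (hrest ▸ hJ)
    rw [hrest] at hlt
    rw [splitAux_succ (join_ne_nil (List.cons_ne_nil a A) hlast), if_neg (hrest ▸ hJ), hrest,
      splitAux_join hA' hlast' (by omega), Join, ipfPrefixLength_append ha hshift, List.take_left]

/-- `Join` and `Split` are mutually inverse bijections between finite lists of
increasing parking functions (taken with no trailing empty blocks, matching the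
identification of lists differing by trailing empty parking functions) and
finite weakly increasing sequences of positive integers. -/
theorem stmt3 :
    (∀ p : List ℕ, p.Pairwise (· ≤ ·) → (∀ x ∈ p, 1 ≤ x) →
      (∀ a ∈ Split p, IsIPF a) ∧ (Split p).getLast? ≠ some ([] : List ℕ) ∧
        Join (Split p) = p) ∧
    (∀ A : List (List ℕ), (∀ a ∈ A, IsIPF a) → A.getLast? ≠ some ([] : List ℕ) →
      (Join A).Pairwise (· ≤ ·) ∧ (∀ x ∈ Join A, 1 ≤ x) ∧ Split (Join A) = A) :=
  ⟨fun _ hs hpos =>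
      ⟨fun _ => isIPF_of_mem_splitAux, getLast?_splitAux_ne hs hpos (Nat.lt_succ_self _),
        join_splitAux hs hpos (Nat.lt_succ_self _)⟩,
    fun _ hA hlast =>
      ⟨pairwise_join hA, one_le_of_mem_join hA, splitAux_join hA hlast (Nat.lt_succ_self _)⟩⟩
end

section
/- The number of parking completions of t = (t_1,...,t_m) in [n] equals the sum over all (ℓ_1,...,ℓ_{m+1}) ∈ N^{m+1} satisfying ℓ_1+...+ℓ_j ≥ t_j − j for all j ∈ [m] and ℓ_1+...+ℓ_{m+1} = n−m, of the multinomial coefficient binom(n−m; ℓ_1,...,ℓ_{m+1}) times the product over j of (ℓ_j+1)^{ℓ_j−1}. -/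
/-!
Let `N = n - m`. When cars with preferences `c` park one after the other on the spots
`1, 2, 3, …`, each taking the first free spot at or after its preference, the spots left empty
are `gap c 1 < gap c 2 < ⋯`, where `gap c j` is the least `v` with `#{k | c k ≤ v} + j ≤ v`.
Comparing `#{i | u i ≤ v}` with `#{k | c k ≤ v}` shows that `c` is a parking completion of `t`
exactly when all preferences are positive, `t j ≤ gap c (j + 1)` for `j < m`, and
`gap c (m + 1) = n + 1`.

The first `m` empty spots cut the cars into `m + 1` consecutive blocks: if block `j` has `ℓ j`
cars, they occupy the `ℓ j` spots just after the `j`-th empty spot and, shifted down, form a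
parking function. Conversely, an assignment `g` of the cars to blocks together with a parking
function on each block determines `c`, and the empty spots of `c` are then the spots between the
blocks. So the completions with block sizes `ℓ` number `binom(N; ℓ) ∏ (ℓ j + 1) ^ (ℓ j - 1)`:
the multinomial coefficient counts the assignments `g`, and Pollak's cycle argument counts the
parking functions on each block.
-/

open Finset

namespace Parking

-- The cycle lemma of Dvoretzky and Motzkin, in the form needed for Pollak's argument.
theorem exists_lt_forall_le_add {p : ℕ} (hp : 0 < p) {h : ℕ → ℤ}
    (hper : ∀ j, h (j + p) = h j - 1) : ∃ j < p, ∀ d < p, h j ≤ h (j + d) := by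
  obtain ⟨j', hj', hmin⟩ := exists_min_image (range p) h ⟨0, mem_range.2 hp⟩
  -- the first index attaining the minimum over `[0, p)`
  have hex : ∃ j, h j ≤ h j' := ⟨j', le_rfl⟩
  have hfirst : h (Nat.find hex) ≤ h j' := Nat.find_spec hex
  refine ⟨Nat.find hex, (Nat.find_min' hex le_rfl).trans_lt (mem_range.1 hj'), fun d hd => ?_⟩
  rcases lt_or_ge (Nat.find hex + d) p with hlt | hge
  · exact hfirst.trans (hmin _ (mem_range.2 hlt))
  · have := Nat.find_min hex (m := Nat.find hex + d - p) (by omega)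
    rw [show Nat.find hex + d = (Nat.find hex + d - p) + p by omega, hper]
    omega

theorem eq_of_forall_le_add {p : ℕ} {h : ℕ → ℤ} (hper : ∀ j, h (j + p) = h j - 1)
    {j₁ j₂ : ℕ} (hj₁ : j₁ < p) (hj₂ : j₂ < p) (h₁ : ∀ d < p, h j₁ ≤ h (j₁ + d))
    (h₂ : ∀ d < p, h j₂ ≤ h (j₂ + d)) : j₁ = j₂ := by
  wlog hlt : j₁ < j₂ generalizing j₁ j₂
  · rcases (not_lt.1 hlt).lt_or_eq with hlt | heq
    · exact (this hj₂ hj₁ h₂ h₁ hlt).symm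
    · exact heq.symm
  have e₁ := h₁ (j₂ - j₁) (by omega)
  have e₂ := h₂ (j₁ + p - j₂) (by omega)
  rw [show j₁ + (j₂ - j₁) = j₂ by omega] at e₁
  rw [show j₂ + (j₁ + p - j₂) = j₁ + p by omega, hper] at e₂
  omega

variable {ι : Type*} [Fintype ι]

section ParkingFunction

def IsParkingOn (a : ℕ) (q : ι → ℕ) : Prop :=
  (∀ k, a < q k) ∧ ∀ d ≤ Fintype.card ι, d ≤ #{k | q k ≤ a + d}

theorem IsParkingOn.le_add_card {a : ℕ} {q : ι → ℕ} (h : IsParkingOn a q) (k : ι) :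
    q k ≤ a + Fintype.card ι := by
  have hall := h.2 _ le_rfl
  rw [← card_univ] at hall
  exact card_filter_eq_iff.1 (hall.antisymm' (card_filter_le _ _)) k (mem_univ k)

-- `b` is read as the preferences `(b k).val + 1`.
def IsParkingMod (b : ι → ZMod (Fintype.card ι + 1)) : Prop :=
  ∀ d ≤ Fintype.card ι, d ≤ #{k | (b k).val < d}

def cumCount {p : ℕ} (b : ι → ZMod p) (j : ℕ) : ℕ := ∑ w ∈ range j, #{k | b k = w}

theorem cumCount_add {p : ℕ} [NeZero p] (b : ι → ZMod p) (j : ℕ) {d : ℕ} (hd : d ≤ p) :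
    cumCount b (j + d) = cumCount b j + #{k | (b k - j).val < d} := by
  rw [cumCount, sum_range_add, ← cumCount,
    card_eq_sum_card_fiberwise (f := fun k => (b k - j).val) (t := range d)
      (fun k hk => by simpa using hk)]
  congr 1
  refine sum_congr rfl fun w hw => ?_
  have hwd : w < d := mem_range.1 hw
  have hval (y : ZMod p) : y.val = w ↔ y = w :=
    ⟨fun h => by rw [← h, ZMod.natCast_zmod_val],
      fun h => by rw [h, ZMod.val_natCast_of_lt (hwd.trans_le hd)]⟩
  rw [filter_filter]
  refine congrArg card (filter_congr fun k _ => ?_)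
  rw [Nat.cast_add, ← sub_eq_iff_eq_add', ← hval]
  omega

def excess {p : ℕ} (b : ι → ZMod p) (j : ℕ) : ℤ := cumCount b j - j

theorem excess_add_period (b : ι → ZMod (Fintype.card ι + 1)) (j : ℕ) :
    excess b (j + (Fintype.card ι + 1)) = excess b j - 1 := by
  have := cumCount_add b j le_rfl
  rw [filter_true_of_mem fun k _ => ZMod.val_lt _, card_univ] at this
  simp only [excess, this]
  push_cast
  ring

theorem isParkingMod_sub_iff (b : ι → ZMod (Fintype.card ι + 1)) (j : ℕ) :
    IsParkingMod (fun k => b k - j) ↔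
      ∀ d < Fintype.card ι + 1, excess b j ≤ excess b (j + d) := by
  refine forall_congr' fun d => ?_
  rw [Nat.lt_succ_iff]
  refine imp_congr_right fun hd => ?_
  simp only [excess, cumCount_add b j (Nat.le_succ_of_le hd)]
  push_cast
  omega

theorem exists_isParkingMod_add (b : ι → ZMod (Fintype.card ι + 1)) :
    ∃ z, IsParkingMod (fun k => b k + z) := by
  obtain ⟨j, -, hj⟩ := exists_lt_forall_le_add (Nat.succ_pos _) (excess_add_period b)
  exact ⟨-j, by simpa only [← sub_eq_add_neg] using (isParkingMod_sub_iff b j).2 hj⟩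

theorem eq_zero_of_isParkingMod_add {b : ι → ZMod (Fintype.card ι + 1)} {z : ZMod _}
    (hb : IsParkingMod b) (hbz : IsParkingMod (fun k => b k + z)) : z = 0 := by
  have h₀ := (isParkingMod_sub_iff b 0).1 (by simpa using hb)
  have hz := (isParkingMod_sub_iff b (-z).val).1 (by
    simpa only [ZMod.natCast_zmod_val, sub_neg_eq_add] using hbz)
  have := eq_of_forall_le_add (excess_add_period b) (ZMod.val_lt _) (Nat.succ_pos _) hz h₀
  rwa [ZMod.val_eq_zero, neg_eq_zero] at this

theorem card_isParkingMod :
    Nat.card {b : ι → ZMod (Fintype.card ι + 1) // IsParkingMod b} =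
      (Fintype.card ι + 1) ^ (Fintype.card ι - 1) := by
  set s := Fintype.card ι
  have hbij : Function.Bijective fun bz : {b : ι → ZMod (s + 1) // IsParkingMod b} × ZMod (s + 1) =>
      fun k => bz.1.1 k + bz.2 := by
    refine ⟨fun ⟨⟨b, hb⟩, z⟩ ⟨⟨b', hb'⟩, z'⟩ h => ?_, fun b => ?_⟩
    · obtain rfl : b' = fun k => b k + (z - z') :=
        funext fun k => by rw [add_sub]; exact eq_sub_of_add_eq (congrFun h k).symm
      obtain rfl := sub_eq_zero.1 (eq_zero_of_isParkingMod_add hb hb')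
      simp
    · obtain ⟨z, hz⟩ := exists_isParkingMod_add b
      exact ⟨(⟨_, hz⟩, -z), by simp⟩
  have hcard := Nat.card_eq_of_bijective _ hbij
  rw [Nat.card_prod, Nat.card_fun, Nat.card_zmod, Nat.card_eq_fintype_card (α := ι)] at hcard
  have hpow : (s + 1) ^ s = (s + 1) ^ (s - 1) * (s + 1) := by cases s <;> simp [pow_succ]
  rw [hpow] at hcard
  exact Nat.eq_of_mul_eq_mul_right (Nat.succ_pos s) hcard

theorem card_isParkingOn (a : ℕ) :
    Nat.card {q : ι → ℕ // IsParkingOn a q} = (Fintype.card ι + 1) ^ (Fintype.card ι - 1) := by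
  rw [← card_isParkingMod]
  have hval {q : ι → ℕ} (hq : IsParkingOn a q) (k : ι) :
      ((q k - a - 1 : ℕ) : ZMod (Fintype.card ι + 1)).val = q k - a - 1 :=
    ZMod.val_natCast_of_lt (by have := hq.le_add_card k; omega)
  refine Nat.card_congr
    { toFun := fun q => ⟨fun k => (q.1 k - a - 1 : ℕ), fun d hd => ?_⟩
      invFun := fun b => ⟨fun k => a + (b.1 k).val + 1, fun k => by simp only; omega,
        fun d hd => ?_⟩
      left_inv := fun q => Subtype.ext <| funext fun k => ?_
      right_inv := fun b => Subtype.ext <| funext fun k => ?_ }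
  · convert q.2.2 d hd using 2
    ext k
    simp only [mem_filter, mem_univ, true_and, hval q.2]
    have := q.2.1 k
    omega
  · convert b.2 d hd using 2
    ext k
    simp only [mem_filter, mem_univ, true_and]
    omega
  · have := q.2.1 k
    simp only [hval q.2]
    omega
  · simp [show a + (b.1 k).val + 1 - a - 1 = (b.1 k).val by omega]

end ParkingFunction

section FiberCount

-- Compare the coefficients of `∏ j, X j ^ ℓ j` in `(∑ j, X j) ^ #ι`, expanded once as a sum over
-- all maps `ι → κ` and once by the multinomial theorem.
open MvPolynomial in
theorem card_fun_fiberCard_eq_multinomial {κ : Type*} [DecidableEq ι] [Fintype κ]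
    [DecidableEq κ] (ℓ : κ → ℕ) (hℓ : ∑ j, ℓ j = Fintype.card ι) :
    #{g : ι → κ | ∀ j, #{k | g k = j} = ℓ j} = Nat.multinomial univ ℓ := by
  let e : (κ → ℕ) → (κ →₀ ℕ) := fun x => Finsupp.indicator univ fun i _ => x i
  have he : Function.Injective e := fun x y h => funext fun i => by
    simpa [e] using DFunLike.congr_fun h i
  have coeff_X_pow (x : κ → ℕ) :
      coeff (e ℓ) (∏ j, (X j : MvPolynomial κ ℕ) ^ x j) = if ℓ = x then 1 else 0 := by
    simp only [coeff_prod_X_pow, he.eq_iff, e]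
  have expand_fun : (∑ j, (X j : MvPolynomial κ ℕ)) ^ Fintype.card ι =
      ∑ g : ι → κ, ∏ j, X j ^ #{k | g k = j} := by
    rw [← card_univ, ← prod_const, Fintype.prod_sum]
    refine sum_congr rfl fun g _ => ?_
    rw [← prod_fiberwise' univ g]
    simp
  have := congrArg (coeff (e ℓ))
    (sum_pow_eq_sum_piAntidiag univ (X : κ → MvPolynomial κ ℕ) (Fintype.card ι))
  simp only [expand_fun, coeff_sum, coeff_X_pow, ← map_natCast C, coeff_C_mul, mul_ite, mul_one,
    mul_zero] at this
  rw [sum_ite_eq_of_mem _ _ _ (mem_piAntidiag.2 ⟨hℓ, by simp⟩)] at this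
  simpa [eq_comm, _root_.funext_iff] using this.symm

theorem finsum_mem_card_fiber_mul {α β : Type*} [Fintype α] [DecidableEq β] (f : α → β)
    (S : Set β) [DecidablePred (· ∈ S)] (F : β → ℕ) :
    ∑ᶠ b ∈ S, #{a | f a = b} * F b = ∑ a with f a ∈ S, F (f a) := by
  rw [finsum_mem_eq_sum_of_subset (t := (univ.filter fun a => f a ∈ S).image f) _ ?_ ?_,
    sum_comp]
  · refine sum_congr rfl fun b hb => ?_
    obtain ⟨a, ha, rfl⟩ := mem_image.1 hb
    rw [filter_filter, smul_eq_mul]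
    congr 2
    ext a'
    simp only [mem_filter, mem_univ, true_and] at ha ⊢
    exact ⟨fun h => ⟨h ▸ ha, h⟩, fun h => h.2⟩
  · rintro b ⟨hbS, hb⟩
    obtain ⟨a, ha⟩ := card_ne_zero.1 (left_ne_zero_of_mul hb)
    exact mem_image.2 ⟨a, by simpa [(mem_filter.1 ha).2] using hbS, (mem_filter.1 ha).2⟩
  · intro b hb
    obtain ⟨a, ha, rfl⟩ := mem_image.1 (mem_coe.1 hb)
    exact (mem_filter.1 ha).2

end FiberCount

section Gap

variable (c : ι → ℕ)

def countLE (v : ℕ) : ℕ := #{k | c k ≤ v}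

theorem countLE_mono : Monotone (countLE c) := fun _ _ h =>
  card_le_card <| monotone_filter_right _ fun _ _ hk => le_trans hk h

theorem countLE_le_card (v : ℕ) : countLE c v ≤ Fintype.card ι :=
  (card_filter_le _ _).trans_eq card_univ

theorem countLE_eq_card_iff {v : ℕ} : countLE c v = Fintype.card ι ↔ ∀ k, c k ≤ v := by
  simp [countLE, ← card_univ, card_filter_eq_iff]

theorem countLE_pred_lt {k : ι} (hk : 1 ≤ c k) : countLE c (c k - 1) < countLE c (c k) :=
  card_lt_card <| (ssubset_iff_of_subset (monotone_filter_right _ fun _ _ h => by omega)).2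
    ⟨k, by simp, by simp; omega⟩

theorem countLE_add_card_Ioc {a b : ℕ} (hab : a ≤ b) :
    countLE c a + #{k | a < c k ∧ c k ≤ b} = countLE c b := by
  classical
  rw [countLE, countLE, ← card_union_of_disjoint (disjoint_filter.2 fun k _ h h' => by omega)]
  congr 1
  ext k
  simp only [mem_union, mem_filter, mem_univ, true_and]
  omega

-- The `j`-th spot left empty when the cars park on `1, 2, 3, …` with preferences `c`.
noncomputable def gap (j : ℕ) : ℕ := sInf {v | countLE c v + j ≤ v}

theorem gap_le {j v : ℕ} (h : countLE c v + j ≤ v) : gap c j ≤ v := Nat.sInf_le h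

theorem countLE_gap_add_le (j : ℕ) : countLE c (gap c j) + j ≤ gap c j :=
  Nat.sInf_mem (s := {v | countLE c v + j ≤ v}) ⟨Fintype.card ι + j, by
    simpa using countLE_le_card c _⟩

theorem le_gap_iff {x j : ℕ} : x ≤ gap c j ↔ ∀ v < x, v < countLE c v + j := by
  refine ⟨fun h v hv => ?_, fun h => ?_⟩
  · simpa using Nat.notMem_of_lt_sInf (hv.trans_le h)
  · by_contra! hx
    have := h _ hx
    have := countLE_gap_add_le c j
    omega

theorem countLE_gap_add (j : ℕ) : countLE c (gap c j) + j = gap c j := by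
  refine (countLE_gap_add_le c j).antisymm ?_
  rcases Nat.eq_zero_or_pos (gap c j) with h | h
  · omega
  · have := (le_gap_iff c (j := j)).1 le_rfl (gap c j - 1) (by omega)
    have := countLE_mono c (Nat.sub_le (gap c j) 1)
    omega

theorem gap_lt_gap_succ (j : ℕ) : gap c j < gap c (j + 1) := by
  refine lt_of_le_of_ne ((le_gap_iff c (j := j + 1)).2 fun v hv => ?_) fun h => ?_
  · have := (le_gap_iff c (j := j)).1 le_rfl v hv
    omega
  · have := countLE_gap_add c j
    have := countLE_gap_add_le c (j + 1)
    rw [← h] at this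
    omega

theorem gap_strictMono : StrictMono (gap c) := strictMono_nat_of_lt_succ (gap_lt_gap_succ c)

theorem gap_zero (hc : ∀ k, 1 ≤ c k) : gap c 0 = 0 :=
  Nat.eq_zero_of_le_zero <| gap_le c <| by
    simp [countLE, fun k => Nat.one_le_iff_ne_zero.1 (hc k)]

theorem ne_gap {j : ℕ} (hj : 1 ≤ j) (k : ι) : c k ≠ gap c j := by
  intro hk
  have hgap := countLE_gap_add c j
  have hlt := countLE_pred_lt c (k := k) (by omega)
  have := (le_gap_iff c (j := j)).1 le_rfl (c k - 1) (by omega)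
  rw [hk] at hlt this
  omega

end Gap

section Blocks

variable {m : ℕ}

-- The spot left empty before block `r`: block `r` fills the spots
-- `blockStart ℓ r + 1, …, blockStart ℓ r + ℓ r`.
def blockStart (ℓ : Fin (m + 1) → ℕ) (r : ℕ) : ℕ := r + ∑ i with i.1 < r, ℓ i

theorem blockStart_zero (ℓ : Fin (m + 1) → ℕ) : blockStart ℓ 0 = 0 := by simp [blockStart]

theorem blockStart_succ (ℓ : Fin (m + 1) → ℕ) (r : Fin (m + 1)) :
    blockStart ℓ (r + 1) = blockStart ℓ r + ℓ r + 1 := by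
  have : univ.filter (fun i : Fin (m + 1) => i.1 < r + 1) =
      insert r (univ.filter fun i : Fin (m + 1) => i.1 < r) := by
    ext i
    simp [Fin.ext_iff]
    omega
  rw [blockStart, blockStart, this, sum_insert (by simp)]
  ring

theorem blockStart_mono (ℓ : Fin (m + 1) → ℕ) : Monotone (blockStart ℓ) := fun _ _ h =>
  add_le_add h <| sum_le_sum_of_subset <| monotone_filter_right _ fun _ _ hi => hi.trans_le h

theorem blockStart_add_lt (ℓ : Fin (m + 1) → ℕ) {i j : Fin (m + 1)} (h : i < j) :
    blockStart ℓ i + ℓ i < blockStart ℓ j := by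
  have := blockStart_mono ℓ (Nat.succ_le_of_lt h)
  rw [blockStart_succ] at this
  omega

def blockSizes (g : ι → Fin (m + 1)) (j : Fin (m + 1)) : ℕ := #{k | g k = j}

theorem sum_blockSizes (g : ι → Fin (m + 1)) : ∑ j, blockSizes g j = Fintype.card ι :=
  (card_eq_sum_card_fiberwise fun k _ => mem_univ (g k)).symm

theorem card_lt_add_eq_blockStart (g : ι → Fin (m + 1)) (r : ℕ) :
    #{k | (g k).1 < r} + r = blockStart (blockSizes g) r := by
  rw [blockStart, add_comm, card_eq_sum_card_fiberwise (f := g) (t := {i | i.1 < r})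
    (fun k hk => by simpa using hk)]
  congr 1
  refine sum_congr rfl fun i hi => congrArg card ?_
  ext k
  simp only [mem_filter, mem_univ, true_and] at hi ⊢
  exact ⟨fun h => h.2, fun h => ⟨h ▸ hi, h⟩⟩

def IsBlockParking (g : ι → Fin (m + 1)) (c : ι → ℕ) : Prop :=
  ∀ j : Fin (m + 1), IsParkingOn (blockStart (blockSizes g) j) fun k : {k // g k = j} => c k

variable {g : ι → Fin (m + 1)} {c : ι → ℕ}

theorem isBlockParking_iff :
    IsBlockParking g c ↔ (∀ k, blockStart (blockSizes g) (g k) < c k) ∧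
      ∀ j, ∀ d ≤ blockSizes g j, d ≤ #{k | g k = j ∧ c k ≤ blockStart (blockSizes g) j + d} := by
  have hcard (j) (x : ℕ) : #{k : {k // g k = j} | c k ≤ x} = #{k | g k = j ∧ c k ≤ x} := by
    rw [← Fintype.card_subtype, ← Fintype.card_subtype]
    exact Fintype.card_congr (Equiv.subtypeSubtypeEquivSubtypeInter _ fun k => c k ≤ x)
  simp only [IsBlockParking, IsParkingOn, Fintype.card_subtype, hcard, forall_and]
  exact and_congr ⟨fun h k => h (g k) ⟨k, rfl⟩, fun h j ⟨k, hk⟩ => hk ▸ h k⟩ Iff.rfl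

theorem IsBlockParking.le (h : IsBlockParking g c) (k : ι) :
    c k ≤ blockStart (blockSizes g) (g k) + blockSizes g (g k) := by
  simpa [Fintype.card_subtype, blockSizes] using (h (g k)).le_add_card ⟨k, rfl⟩

theorem IsBlockParking.countLE_blockStart_add_le (h : IsBlockParking g c) (r : ℕ) :
    countLE c (blockStart (blockSizes g) r) + r ≤ blockStart (blockSizes g) r := by
  have hsub : countLE c (blockStart (blockSizes g) r) ≤ #{k | (g k).1 < r} := by
    refine card_le_card fun k hk => ?_
    simp only [mem_filter, mem_univ, true_and] at hk ⊢
    by_contra! hr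
    have := blockStart_mono (blockSizes g) hr
    have := (isBlockParking_iff.1 h).1 k
    omega
  have := card_lt_add_eq_blockStart g r
  omega

theorem IsBlockParking.le_countLE_add (h : IsBlockParking g c) (j : Fin (m + 1)) {d : ℕ}
    (hd : d ≤ blockSizes g j) :
    blockStart (blockSizes g) j + d ≤ countLE c (blockStart (blockSizes g) j + d) + j := by
  classical
  have hpark := (isBlockParking_iff.1 h).2 j d hd
  generalize hv : blockStart (blockSizes g) j + d = v at hpark ⊢
  -- the earlier blocks lie entirely below `v`
  have hsub : univ.filter (fun k => (g k).1 < j) ∪ univ.filter (fun k => g k = j ∧ c k ≤ v) ⊆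
      univ.filter fun k => c k ≤ v := by
    intro k hk
    simp only [mem_union, mem_filter, mem_univ, true_and] at hk ⊢
    rcases hk with hk | hk
    · have := blockStart_add_lt (blockSizes g) (Fin.lt_def.2 hk)
      have := h.le k
      omega
    · exact hk.2
  have hdisj : Disjoint (univ.filter fun k => (g k).1 < j)
      (univ.filter fun k => g k = j ∧ c k ≤ v) :=
    disjoint_filter.2 fun k _ hk hk' => by simp [hk'.1] at hk
  have := card_le_card hsub
  rw [card_union_of_disjoint hdisj] at this
  have := card_lt_add_eq_blockStart g j
  simp only [countLE]
  omega

theorem IsBlockParking.gap_eq (h : IsBlockParking g c) :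
    ∀ r ≤ m + 1, gap c r = blockStart (blockSizes g) r
  | 0, _ => by
    rw [blockStart_zero, gap_zero]
    exact fun k => Nat.one_le_of_lt ((isBlockParking_iff.1 h).1 k)
  | r + 1, hr => by
    have ih := h.gap_eq r (by omega)
    refine (gap_le c (h.countLE_blockStart_add_le _)).antisymm ((le_gap_iff c).2 fun v hv => ?_)
    rcases lt_or_ge v (gap c r) with hvr | hvr
    · have := (le_gap_iff c).1 le_rfl v hvr
      omega
    · have hstart := blockStart_succ (blockSizes g) ⟨r, hr⟩
      have := h.le_countLE_add ⟨r, hr⟩ (d := v - gap c r) (by simp only at hstart; omega)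
      simp only at this
      rw [← ih, Nat.add_sub_cancel' hvr] at this
      omega

end Blocks

section BlockOf

variable (m : ℕ) (c : ι → ℕ)

noncomputable def blockOf (k : ι) : Fin (m + 1) :=
  ⟨#{j : Fin m | gap c (j + 1) < c k},
    Nat.lt_succ_of_le ((card_filter_le _ _).trans_eq (by simp))⟩

variable {m c}

theorem blockOf_eq_of_gap_lt {k : ι} {j : Fin (m + 1)} (h₁ : gap c j < c k)
    (h₂ : c k ≤ gap c (j + 1)) : blockOf m c k = j := by
  have hmono := (gap_strictMono c).monotone
  have : (univ.filter fun i : Fin m => gap c (i + 1) < c k) = univ.filter fun i => i.1 < j.1 := by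
    refine filter_congr fun i _ => ⟨fun hi => ?_, fun hi => (hmono hi).trans_lt h₁⟩
    by_contra! hji
    exact (h₂.trans (hmono (Nat.succ_le_succ hji))).not_gt hi
  ext
  rw [blockOf, Fin.val_mk, this, Fin.card_filter_val_lt, min_eq_right (Nat.lt_succ_iff.1 j.2)]

theorem IsBlockParking.blockOf_eq {g : ι → Fin (m + 1)} (h : IsBlockParking g c) :
    blockOf m c = g := by
  funext k
  have hsucc := blockStart_succ (blockSizes g) (g k)
  apply blockOf_eq_of_gap_lt
  · rw [h.gap_eq _ (g k).2.le]
    exact (isBlockParking_iff.1 h).1 k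
  · rw [h.gap_eq _ (g k).2, hsucc]
    have := h.le k
    omega

variable (hc : ∀ k, 1 ≤ c k) (htop : ∀ k, c k < gap c (m + 1))
include hc htop

theorem exists_gap_lt_lt (k : ι) : ∃ j : Fin (m + 1), gap c j < c k ∧ c k < gap c (j + 1) := by
  have hex : ∃ J, c k < gap c (J + 1) := ⟨m, htop k⟩
  refine ⟨⟨Nat.find hex, Nat.lt_succ_of_le (Nat.find_min' hex (htop k))⟩, ?_, Nat.find_spec hex⟩
  rcases Nat.eq_zero_or_pos (Nat.find hex) with h0 | hpos
  · simp only [h0, gap_zero c hc]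
    exact hc k
  · have hle := not_lt.1 (Nat.find_min hex (Nat.sub_one_lt_of_lt hpos))
    rw [Nat.sub_add_cancel hpos] at hle
    exact lt_of_le_of_ne hle (ne_gap c hpos k).symm

theorem blockOf_eq_iff {k : ι} {j : Fin (m + 1)} :
    blockOf m c k = j ↔ gap c j < c k ∧ c k < gap c (j + 1) := by
  refine ⟨fun h => ?_, fun h => blockOf_eq_of_gap_lt h.1 h.2.le⟩
  obtain ⟨j', hj'⟩ := exists_gap_lt_lt hc htop k
  rwa [← h, blockOf_eq_of_gap_lt hj'.1 hj'.2.le]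

theorem card_blockOf_eq_filter (j : Fin (m + 1)) {x : ℕ} (hx : x < gap c (j + 1)) :
    #{k | blockOf m c k = j ∧ c k ≤ x} = #{k | gap c j < c k ∧ c k ≤ x} := by
  refine congrArg card (filter_congr fun k _ => ?_)
  rw [blockOf_eq_iff hc htop]
  omega

theorem gap_add_blockSizes_blockOf (j : Fin (m + 1)) :
    gap c j + blockSizes (blockOf m c) j + 1 = gap c (j + 1) := by
  have hsize : blockSizes (blockOf m c) j = #{k | gap c j < c k ∧ c k ≤ gap c (j + 1)} := by
    refine congrArg card (filter_congr fun k _ => ?_)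
    have := ne_gap c (j := j + 1) (Nat.succ_pos _) k
    rw [blockOf_eq_iff hc htop]
    omega
  have := countLE_add_card_Ioc c (gap_lt_gap_succ c j).le
  have := countLE_gap_add c j
  have := countLE_gap_add c (j + 1)
  omega

theorem blockStart_blockSizes_blockOf :
    ∀ r ≤ m + 1, blockStart (blockSizes (blockOf m c)) r = gap c r
  | 0, _ => by rw [blockStart_zero, gap_zero c hc]
  | r + 1, hr => by
    have hsucc := blockStart_succ (blockSizes (blockOf m c)) ⟨r, hr⟩
    have hsize := gap_add_blockSizes_blockOf hc htop ⟨r, hr⟩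
    have ih := blockStart_blockSizes_blockOf r (by omega)
    simp only at hsucc hsize
    omega

theorem isBlockParking_blockOf : IsBlockParking (blockOf m c) c := by
  have hstart (j : Fin (m + 1)) := blockStart_blockSizes_blockOf hc htop j j.2.le
  refine isBlockParking_iff.2 ⟨fun k => ?_, fun j d hd => ?_⟩
  · rw [hstart]
    exact ((blockOf_eq_iff hc htop).1 rfl).1
  · have := gap_add_blockSizes_blockOf hc htop j
    rw [hstart, card_blockOf_eq_filter hc htop j (by omega)]
    have := countLE_add_card_Ioc c (Nat.le_add_right (gap c j) d)
    have := (le_gap_iff c (j := j + 1)).1 le_rfl (gap c j + d) (by omega)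
    have := countLE_gap_add c j
    omega

end BlockOf

theorem exists_isBlockParking_iff {m : ℕ} {c : ι → ℕ} :
    (∃ g : ι → Fin (m + 1), IsBlockParking g c) ↔
      (∀ k, 1 ≤ c k) ∧ Fintype.card ι + m < gap c (m + 1) := by
  constructor
  · rintro ⟨g, h⟩
    refine ⟨fun k => Nat.one_le_of_lt ((isBlockParking_iff.1 h).1 k), ?_⟩
    have := card_lt_add_eq_blockStart g (m + 1)
    rw [filter_true_of_mem fun k _ => (g k).2, card_univ] at this
    rw [h.gap_eq _ le_rfl]
    omega
  · rintro ⟨hc, hgap⟩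
    have := (le_gap_iff c (j := m + 1)).1 hgap (Fintype.card ι + m) (Nat.lt_succ_self _)
    have := countLE_le_card c (Fintype.card ι + m)
    have hle := (countLE_eq_card_iff c (v := Fintype.card ι + m)).1 (by omega)
    exact ⟨_, isBlockParking_blockOf hc fun k => (hle k).trans_lt hgap⟩

theorem card_isBlockParking {m : ℕ} (g : ι → Fin (m + 1)) :
    Nat.card {c : ι → ℕ // IsBlockParking g c} =
      ∏ j, (blockSizes g j + 1) ^ (blockSizes g j - 1) := by
  let e : (ι → ℕ) ≃ ∀ j, {k // g k = j} → ℕ :=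
    ((Equiv.sigmaFiberEquiv g).symm.arrowCongr (Equiv.refl ℕ)).trans
      (Equiv.piCurry fun _ _ => ℕ)
  let e' : {c // IsBlockParking g c} ≃
      ∀ j, {q : {k // g k = j} → ℕ // IsParkingOn (blockStart (blockSizes g) j) q} :=
    (e.subtypeEquiv fun _ => Iff.rfl).trans Equiv.subtypePiEquivPi
  rw [Nat.card_congr e', Nat.card_pi]
  refine prod_congr rfl fun j _ => ?_
  rw [card_isParkingOn, Fintype.card_subtype]
  rfl

theorem card_exists_isBlockParking [DecidableEq ι] {m : ℕ} (A : (Fin (m + 1) → ℕ) → Prop)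
    [DecidablePred A] :
    Nat.card {c : ι → ℕ // ∃ g, IsBlockParking g c ∧ A (blockSizes g)} =
      ∑ g : ι → Fin (m + 1) with A (blockSizes g),
        ∏ j, (blockSizes g j + 1) ^ (blockSizes g j - 1) := by
  have (g : ι → Fin (m + 1)) : Finite {c // IsBlockParking g c} :=
    Nat.finite_of_card_ne_zero (by rw [card_isBlockParking]; positivity)
  let f (x : Σ g : {g : ι → Fin (m + 1) // A (blockSizes g)}, {c // IsBlockParking g.1 c}) :
      {c : ι → ℕ // ∃ g, IsBlockParking g c ∧ A (blockSizes g)} := ⟨x.2.1, x.1.1, x.2.2, x.1.2⟩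
  have hf : f.Bijective := by
    refine ⟨fun ⟨⟨g, _⟩, c, hc⟩ ⟨⟨g', _⟩, c', hc'⟩ h => ?_,
      fun ⟨c, g, hc, hg⟩ => ⟨⟨⟨g, hg⟩, c, hc⟩, rfl⟩⟩
    obtain rfl : c = c' := congrArg Subtype.val h
    obtain rfl : g = g' := hc.blockOf_eq.symm.trans hc'.blockOf_eq
    rfl
  rw [← Nat.card_eq_of_bijective f hf, Nat.card_sigma,
    sum_subtype (p := fun g => A (blockSizes g)) _ (fun g => by simp)]
  exact sum_congr rfl fun g _ => card_isBlockParking g.1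

section Completion

theorem exists_perm_monotone_le_iff {L : ℕ} {u : Fin L → ℕ} (hu : Monotone u) (c : Fin L → ℕ) :
    (∃ σ : Equiv.Perm (Fin L), Monotone (c ∘ σ) ∧ ∀ i, c (σ i) ≤ u i) ↔
      ∀ v, #{i | u i ≤ v} ≤ countLE c v := by
  have hperm (σ : Equiv.Perm (Fin L)) (v : ℕ) : #{i | c (σ i) ≤ v} = countLE c v :=
    card_equiv σ (by simp)
  constructor
  · rintro ⟨σ, -, hσ⟩ v
    rw [← hperm σ]
    exact card_le_card (monotone_filter_right _ fun i _ hi => (hσ i).trans hi)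
  · intro h
    refine ⟨Tuple.sort c, Tuple.monotone_sort c, fun i => ?_⟩
    by_contra! hlt
    have h₁ : Iic i ⊆ univ.filter fun i' => u i' ≤ u i := fun i' hi' => by
      simpa using hu (mem_Iic.1 hi')
    have h₂ : (univ.filter fun i' => c (Tuple.sort c i') ≤ u i) ⊆ Iio i := fun i' hi' => by
      simp only [mem_filter, mem_univ, true_and] at hi'
      exact mem_Iio.2 (lt_of_not_ge fun hge =>
        (hi'.trans_lt hlt).not_ge (Tuple.monotone_sort c hge))
    have := card_le_card h₁
    have := card_le_card h₂
    have := h (u i)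
    rw [← hperm (Tuple.sort c)] at this
    simp only [Fin.card_Iic, Fin.card_Iio] at *
    omega

theorem card_filter_le_add_card_filter_le {m L n : ℕ} {t : Fin m → ℕ} {u : Fin L → ℕ}
    (ht : Function.Injective t) (hu : Function.Injective u) (htm : ∀ i, t i ∈ Icc 1 n)
    (hum : ∀ j, u j ∈ Icc 1 n) (hcompl : ∀ x ∈ Icc 1 n, (∃ i, t i = x) ↔ ¬ ∃ j, u j = x)
    {v : ℕ} (hv : v ≤ n) : #{j | t j ≤ v} + #{i | u i ≤ v} = v := by
  classical
  have hdisj : Disjoint ((univ.filter fun j => t j ≤ v).image t)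
      ((univ.filter fun i => u i ≤ v).image u) := by
    refine disjoint_left.2 fun x hxt hxu => ?_
    obtain ⟨i, -, rfl⟩ := mem_image.1 hxt
    obtain ⟨j, -, hj⟩ := mem_image.1 hxu
    exact (hcompl _ (htm i)).1 ⟨i, rfl⟩ ⟨j, hj⟩
  have hunion : (univ.filter fun j => t j ≤ v).image t ∪
      (univ.filter fun i => u i ≤ v).image u = Icc 1 v := by
    ext x
    simp only [mem_union, mem_image, mem_filter, mem_univ, true_and, mem_Icc]
    constructor
    · rintro (⟨i, hi, rfl⟩ | ⟨j, hj, rfl⟩)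
      · exact ⟨(mem_Icc.1 (htm i)).1, hi⟩
      · exact ⟨(mem_Icc.1 (hum j)).1, hj⟩
    · rintro ⟨hx1, hxv⟩
      by_cases hx : ∃ i, t i = x
      · obtain ⟨i, rfl⟩ := hx
        exact Or.inl ⟨i, hxv, rfl⟩
      · obtain ⟨j, rfl⟩ := not_not.1 (mt (hcompl x (mem_Icc.2 ⟨hx1, hxv.trans hv⟩)).2 hx)
        exact Or.inr ⟨j, hxv, rfl⟩
  rw [← card_image_of_injective _ ht, ← card_image_of_injective _ hu,
    ← card_union_of_disjoint hdisj, hunion, Nat.card_Icc, Nat.add_sub_cancel]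

theorem forall_card_le_countLE_iff {n m : ℕ} {t : Fin m → ℕ} {u : Fin (n - m) → ℕ}
    (hcount : ∀ v ≤ n, #{j | t j ≤ v} + #{i | u i ≤ v} = v) (c : ι → ℕ) :
    (∀ v, #{i | u i ≤ v} ≤ countLE c v) ↔ ∀ v ≤ n, v ≤ countLE c v + #{j | t j ≤ v} := by
  refine ⟨fun h v hv => ?_, fun h v => ?_⟩
  · have := h v
    have := hcount v hv
    omega
  · rcases le_or_gt v n with hv | hv
    · have := h v hv
      have := hcount v hv
      omega
    · have := h n le_rfl
      have : #{j | t j ≤ n} ≤ m := (card_filter_le _ _).trans_eq (by simp)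
      have : #{i | u i ≤ v} ≤ n - m := (card_filter_le _ _).trans_eq (by simp)
      have := countLE_mono c hv.le
      omega

theorem forall_le_countLE_add_iff {m n : ℕ} {t : Fin m → ℕ} (ht : Monotone t)
    (htn : ∀ j, t j ≤ n) (c : ι → ℕ) :
    (∀ v ≤ n, v ≤ countLE c v + #{j | t j ≤ v}) ↔
      n < gap c (m + 1) ∧ ∀ j : Fin m, t j ≤ gap c (j + 1) := by
  have hbelow {v : ℕ} {j : Fin m} (hv : v < t j) : #{i | t i ≤ v} ≤ j := by
    refine (card_le_card fun i hi => mem_Iio.2 ?_).trans_eq (Fin.card_Iio j)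
    simp only [mem_filter, mem_univ, true_and] at hi
    exact lt_of_not_ge fun hji => (hi.trans_lt hv).not_ge (ht hji)
  have habove {v : ℕ} (hm : #{i | t i ≤ v} < m) : v < t ⟨#{i | t i ≤ v}, hm⟩ := by
    by_contra! htv
    have hsub : Iic ⟨_, hm⟩ ⊆ univ.filter fun i => t i ≤ v := fun i hi => by
      simpa using (ht (mem_Iic.1 hi)).trans htv
    have := card_le_card hsub
    simp at this
  constructor
  · intro h
    refine ⟨(le_gap_iff c).2 fun v hv => ?_, fun j => (le_gap_iff c).2 fun v hv => ?_⟩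
    · have := h v (by omega)
      have : #{i | t i ≤ v} ≤ m := (card_filter_le _ _).trans_eq (by simp)
      omega
    · have := h v (hv.trans_le (htn j)).le
      have := hbelow hv
      omega
  · rintro ⟨htop, hgap⟩ v hv
    rcases lt_or_ge #{i | t i ≤ v} m with hm | hm
    · have := (le_gap_iff c).1 (hgap ⟨_, hm⟩) v (habove hm)
      simp only at this
      omega
    · have := (le_gap_iff c).1 htop v (by omega)
      omega

theorem exists_isBlockParking_le_blockStart_iff {m : ℕ} (t : Fin m → ℕ) (c : ι → ℕ) :
    (∃ g : ι → Fin (m + 1), IsBlockParking g c ∧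
        ∀ j : Fin m, t j ≤ blockStart (blockSizes g) (j + 1)) ↔
      (∀ k, 1 ≤ c k) ∧ Fintype.card ι + m < gap c (m + 1) ∧
        ∀ j : Fin m, t j ≤ gap c (j + 1) := by
  constructor
  · rintro ⟨g, h, ht⟩
    obtain ⟨hc, hgap⟩ := exists_isBlockParking_iff.1 ⟨g, h⟩
    exact ⟨hc, hgap, fun j => h.gap_eq (j + 1) (by omega) ▸ ht j⟩
  · rintro ⟨hc, hgap, ht⟩
    obtain ⟨g, h⟩ := exists_isBlockParking_iff.2 ⟨hc, hgap⟩
    exact ⟨g, h, fun j => h.gap_eq (j + 1) (by omega) ▸ ht j⟩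

theorem exists_perm_sorted_le_iff_exists_isBlockParking {n m : ℕ} {t : Fin m → ℕ}
    {u : Fin (n - m) → ℕ} (ht : StrictMono t) (htm : ∀ i, t i ∈ Icc 1 n)
    (hu : StrictMono u) (hum : ∀ j, u j ∈ Icc 1 n)
    (hcompl : ∀ x ∈ Icc 1 n, (∃ i, t i = x) ↔ ¬ ∃ j, u j = x) (c : Fin (n - m) → ℕ) :
    (∃ σ : Equiv.Perm (Fin (n - m)), Monotone (c ∘ σ) ∧ ∀ i, 1 ≤ c (σ i) ∧ c (σ i) ≤ u i) ↔
      ∃ g : Fin (n - m) → Fin (m + 1), IsBlockParking g c ∧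
        ∀ j : Fin m, t j ≤ blockStart (blockSizes g) (j + 1) := by
  have hmn : m ≤ n := by
    simpa using card_le_card_of_injOn (s := univ) t (fun i _ => htm i) ht.injective.injOn
  have hcount : ∀ v ≤ n, #{j | t j ≤ v} + #{i | u i ≤ v} = v := fun _ hv =>
    card_filter_le_add_card_filter_le ht.injective hu.injective htm hum hcompl hv
  rw [exists_isBlockParking_le_blockStart_iff, Fintype.card_fin, Nat.sub_add_cancel hmn,
    ← forall_le_countLE_add_iff ht.monotone (fun j => (mem_Icc.1 (htm j)).2),
    ← forall_card_le_countLE_iff hcount, ← exists_perm_monotone_le_iff hu.monotone]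
  constructor
  · rintro ⟨σ, hmono, hσ⟩
    exact ⟨fun k => by simpa using (hσ (σ.symm k)).1, σ, hmono, fun i => (hσ i).2⟩
  · rintro ⟨hc, σ, hmono, hσ⟩
    exact ⟨σ, hmono, fun i => ⟨hc _, hσ i⟩⟩

end Completion

end Parking

open Finset Parking in
/-- Theorem 1.1: the number of parking completions of `t` in `[n]` (sequences
`c ∈ [n]^{n-m}` some rearrangement of which is weakly increasing with `i`-th
entry at most `u i`, where `u` is the increasing enumeration of `[n] \ t`)
equals the sum, over all `ℓ ∈ ℕ^{m+1}` with `ℓ_1 + ⋯ + ℓ_j ≥ t_j - j` for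
`j ∈ [m]` and total sum `n - m`, of `binom(n-m; ℓ) ∏_j (ℓ_j + 1)^{ℓ_j - 1}`. -/
theorem stmt7 (n m : ℕ) (t : Fin m → ℕ) (u : Fin (n - m) → ℕ)
    (ht : StrictMono t) (htm : ∀ i, t i ∈ Finset.Icc 1 n)
    (hu : StrictMono u) (hum : ∀ j, u j ∈ Finset.Icc 1 n)
    (hcompl : ∀ x ∈ Finset.Icc 1 n, (∃ i, t i = x) ↔ ¬ ∃ j, u j = x) :
    Nat.card {c : Fin (n - m) → ℕ | ∃ σ : Equiv.Perm (Fin (n - m)),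
        Monotone (c ∘ σ) ∧ ∀ i, 1 ≤ c (σ i) ∧ c (σ i) ≤ u i} =
      ∑ᶠ ℓ ∈ {ℓ : Fin (m + 1) → ℕ |
        (∀ j : Fin m, t j - (j.1 + 1) ≤
          ∑ i ∈ Finset.univ.filter (fun i : Fin (m + 1) => i.1 ≤ j.1), ℓ i) ∧
        ∑ i, ℓ i = n - m},
      Nat.multinomial Finset.univ ℓ * ∏ i, (ℓ i + 1) ^ (ℓ i - 1) := by
  classical
  set S := {ℓ : Fin (m + 1) → ℕ | (∀ j : Fin m, t j - (j.1 + 1) ≤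
      ∑ i ∈ Finset.univ.filter (fun i : Fin (m + 1) => i.1 ≤ j.1), ℓ i) ∧ ∑ i, ℓ i = n - m}
  have hS (g : Fin (n - m) → Fin (m + 1)) :
      blockSizes g ∈ S ↔ ∀ j : Fin m, t j ≤ blockStart (blockSizes g) (j + 1) := by
    simp only [S, Set.mem_ofPred_eq, sum_blockSizes, Fintype.card_fin, and_true, blockStart,
      Nat.lt_succ_iff]
    exact forall_congr' fun j => by omega
  calc _ = Nat.card {c : Fin (n - m) → ℕ // ∃ g, IsBlockParking g c ∧ blockSizes g ∈ S} :=
        Nat.card_congr <| Equiv.subtypeEquivRight fun c => by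
          simp only [Set.mem_ofPred_eq, hS,
            exists_perm_sorted_le_iff_exists_isBlockParking ht htm hu hum hcompl c]
    _ = ∑ g : Fin (n - m) → Fin (m + 1) with blockSizes g ∈ S,
          ∏ j, (blockSizes g j + 1) ^ (blockSizes g j - 1) := card_exists_isBlockParking (· ∈ S)
    _ = _ := by
      rw [← finsum_mem_card_fiber_mul blockSizes S fun ℓ => ∏ j, (ℓ j + 1) ^ (ℓ j - 1)]
      refine finsum_mem_congr rfl fun ℓ hℓ => ?_
      rw [← card_fun_fiberCard_eq_multinomial (ι := Fin (n - m)) ℓ (by simpa using hℓ.2)]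
      congr 2
      ext g
      simp [blockSizes, _root_.funext_iff]
end

section
/- For 1 ≤ m ≤ n, the sum over i from 0 to n−m of the number of parking completions of (i+1,...,i+m) in [n] equals (n+1)^{n−m}. -/
/-!
Pollak's cyclic argument. Put `N = k + m + 1` spots on a circle, with `k + 1, …, k + m` blocked,
and let `d : Fin k → Fin N` be arbitrary preferences. Reading `d` from the free spot `p = k - i`
gives a sequence `c` whose blocked spots are `i + 1, …, i + m`, and `c` is a parking completion
of that block exactly when `p + 1` is the first point where the surplus
`#{j | d j < t} - #{free spots < t}` attains its minimum over `t ∈ [0, N]`. That point is unique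
and lies in `[1, k + 1]`, so every `d` is a parking completion for exactly one rotation. As the
rotations are bijections, the sum over `i` counts each of the `N ^ k` sequences `d` once.
-/

open Finset

theorem Fin.val_sub_eq_ite {N : ℕ} (a b : Fin N) :
    ((a - b : Fin N) : ℕ) = if b ≤ a then (a : ℕ) - b else N + a - b := by
  split_ifs with h
  · exact Fin.coe_sub_iff_le.2 h
  · exact Fin.coe_sub_iff_lt.2 (not_le.1 h)

namespace ParkingCompletion

theorem exists_perm_monotone_le_iff {α : Type*} [LinearOrder α] {k : ℕ} (c u : Fin k → α)
    (hu : Monotone u) :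
    (∃ σ : Equiv.Perm (Fin k), Monotone (c ∘ σ) ∧ ∀ j, c (σ j) ≤ u j) ↔
      ∀ x, #{j | u j ≤ x} ≤ #{j | c j ≤ x} := by
  constructor
  · rintro ⟨σ, -, hle⟩ x
    calc #{j | u j ≤ x} ≤ #{j | c (σ j) ≤ x} :=
          card_le_card fun j => by simpa using (hle j).trans
      _ = #{j | c j ≤ x} := card_equiv σ (by simp)
  · intro hcount
    set σ := Tuple.sort c
    refine ⟨σ, Tuple.monotone_sort c, fun j => ?_⟩
    by_contra! hj
    have hu_card : (j : ℕ) + 1 ≤ #{i | u i ≤ u j} :=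
      calc (j : ℕ) + 1 = #(Iic j) := (Fin.card_Iic j).symm
        _ ≤ #{i | u i ≤ u j} := card_le_card fun i hi => by simpa using hu (mem_Iic.1 hi)
    have hc_card : #{i | c i ≤ u j} ≤ j :=
      calc #{i | c i ≤ u j} = #{i | c (σ i) ≤ u j} := (card_equiv σ (by simp)).symm
        _ ≤ #(Iio j) := card_le_card fun i hi => by
          simp only [mem_filter, mem_univ, true_and] at hi
          exact mem_Iio.2 <| lt_of_not_ge fun hji =>
            (hi.trans_lt hj).not_ge (Tuple.monotone_sort c hji)
        _ = j := Fin.card_Iio j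
    exact (hu_card.trans (hcount (u j))).not_gt (Nat.lt_succ_of_le hc_card)

section LeastArgmin

variable {β : Type*} [LinearOrder β]

def IsLeastArgmin (f : ℕ → β) (M r : ℕ) : Prop :=
  r ≤ M ∧ (∀ t ≤ M, f r ≤ f t) ∧ ∀ t < r, f r < f t

theorem IsLeastArgmin.unique {f : ℕ → β} {M r s : ℕ} (hr : IsLeastArgmin f M r)
    (hs : IsLeastArgmin f M s) : r = s := by
  by_contra hne
  rcases Nat.lt_or_gt_of_ne hne with h | h
  · exact (hs.2.2 r h).not_ge (hr.2.1 s hs.1)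
  · exact (hr.2.2 s h).not_ge (hs.2.1 r hr.1)

theorem existsUnique_isLeastArgmin (f : ℕ → β) (M : ℕ) : ∃! r, IsLeastArgmin f M r := by
  obtain ⟨r, hr, hmin⟩ := (range (M + 1)).exists_min_image (fun t => toLex (f t, t)) ⟨0, by simp⟩
  have hrM : r ≤ M := Nat.le_of_lt_succ (mem_range.1 hr)
  have hlex : ∀ t ≤ M, f r < f t ∨ f r = f t ∧ r ≤ t := fun t ht =>
    Prod.Lex.toLex_le_toLex.1 (hmin t (mem_range.2 (Nat.lt_succ_of_le ht)))
  have hr : IsLeastArgmin f M r := by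
    refine ⟨hrM, fun t ht => ?_, fun t htr => ?_⟩
    · rcases hlex t ht with h | ⟨h, -⟩
      exacts [h.le, h.le]
    · rcases hlex t (htr.le.trans hrM) with h | ⟨-, h⟩
      exacts [h, absurd h (not_le.2 htr)]
  exact ⟨r, hr, fun s hs => hs.unique hr⟩

end LeastArgmin

/-- Cars preferring a spot below `t` minus free spots `0, …, k` below `t`. -/
def surplus (D : ℕ → ℕ) (k t : ℕ) : ℤ := D t - (min t (k + 1) : ℕ)

theorem isLeastArgmin_surplus_bounds {D : ℕ → ℕ} {k m r : ℕ} (hD : Monotone D) (hD0 : D 0 = 0)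
    (hDN : D (k + m + 1) = k) (hr : IsLeastArgmin (surplus D k) (k + m + 1) r) :
    1 ≤ r ∧ r ≤ k + 1 := by
  obtain ⟨-, hmin, hlt⟩ := hr
  unfold surplus at hmin hlt
  constructor
  · by_contra! h
    have := hmin (k + m + 1) le_rfl
    rw [Nat.lt_one_iff.1 h, hD0, hDN] at this
    omega
  · by_contra! h
    have := hlt (r - 1) (by omega)
    have := hD (Nat.sub_le r 1)
    omega

theorem isLeastArgmin_surplus_iff {D : ℕ → ℕ} {k m i p : ℕ} (hD : Monotone D) (hD0 : D 0 = 0)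
    (hDN : ∀ t, k + m + 1 ≤ t → D t = k) (hip : i + p = k) :
    IsLeastArgmin (surplus D k) (k + m + 1) (p + 1) ↔
      D (p + 1) ≤ D p ∧ ∀ l, min i l + (min k (l - m) - i) ≤
        D (p + l + 1) - D p + D (min p (p + l + 1 - (k + m + 1))) := by
  unfold IsLeastArgmin surplus
  rw [min_eq_left (show p + 1 ≤ k + 1 by omega)]
  have hDp : D p ≤ D (p + 1) := hD p.le_succ
  have hDpk : D p ≤ k := hDN (k + m + 1) le_rfl ▸ hD (by omega)
  constructor
  · rintro ⟨-, hmin, hlt⟩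
    have hfree : D (p + 1) ≤ D p := by have := hlt p p.lt_succ_self; omega
    refine ⟨hfree, fun l => ?_⟩
    rcases le_or_gt (p + l + 1) (k + m + 1) with hwrap | hwrap
    · rw [show min p (p + l + 1 - (k + m + 1)) = 0 by omega, hD0]
      have := hmin (p + l + 1) hwrap
      have := hD (show p ≤ p + l + 1 by omega)
      omega
    · have := hlt (min p (p + l + 1 - (k + m + 1))) (by omega)
      rw [hDN _ hwrap.le]
      omega
  · rintro ⟨hfree, hcount⟩
    have hbefore : ∀ t < p + 1,
        (D (p + 1) : ℤ) - (p + 1 : ℕ) < D t - (min t (k + 1) : ℕ) := fun t ht => by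
      have h := hcount (t + k + m - p)
      rw [show min p (p + (t + k + m - p) + 1 - (k + m + 1)) = t by omega,
        hDN _ (by omega)] at h
      rw [min_eq_left (by omega : t ≤ k + 1)]
      omega
    refine ⟨by omega, fun t ht => ?_, hbefore⟩
    rcases le_or_gt (p + 1) t with hpt | htp
    · have h := hcount (t - (p + 1))
      rw [show p + (t - (p + 1)) + 1 = t by omega, show min p (t - (k + m + 1)) = 0 by omega,
        hD0] at h
      have := hD hpt
      omega
    · exact (hbefore t htp).le

section CountBelow

variable {ι : Type*} [Fintype ι] {N : ℕ}

def countBelow (d : ι → Fin N) (t : ℕ) : ℕ := #{j | (d j : ℕ) < t}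

theorem countBelow_mono (d : ι → Fin N) : Monotone (countBelow d) :=
  fun _ _ hst => card_le_card (monotone_filter_right _ fun _ _ hj => hj.trans_le hst)

theorem countBelow_zero (d : ι → Fin N) : countBelow d 0 = 0 := by simp [countBelow]

theorem countBelow_of_le (d : ι → Fin N) {t : ℕ} (ht : N ≤ t) :
    countBelow d t = Fintype.card ι := by
  rw [countBelow, filter_true_of_mem fun j _ => (d j).isLt.trans_le ht, card_univ]

theorem countBelow_sub_countBelow [DecidableEq ι] (d : ι → Fin N) {a b : ℕ} (hab : a ≤ b) :
    countBelow d b - countBelow d a = #{j | a ≤ (d j : ℕ) ∧ (d j : ℕ) < b} := by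
  have : (univ.filter fun j => a ≤ (d j : ℕ) ∧ (d j : ℕ) < b) =
      (univ.filter fun j => (d j : ℕ) < b) \ univ.filter fun j => (d j : ℕ) < a := by
    ext j
    simp only [mem_filter, mem_univ, true_and, mem_sdiff]
    omega
  rw [this, card_sdiff_of_subset (monotone_filter_right _ fun _ _ hj => hj.trans_le hab)]
  rfl

end CountBelow

def rotate {ι : Type*} {N : ℕ} (d : ι → Fin N) (b : Fin N) : ι → ℕ :=
  fun j => ((d j - b : Fin N) : ℕ)

theorem rotate_add_right {ι : Type*} {N : ℕ} [NeZero N] (d : ι → Fin N) (b : Fin N) :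
    rotate (fun j => d j + b) b = fun j => (d j : ℕ) := by
  funext j
  exact congrArg Fin.val (add_sub_cancel_right (d j) b)

theorem card_rotate_le {ι : Type*} [Fintype ι] [DecidableEq ι] {N : ℕ} (d : ι → Fin N)
    (b : Fin N) (l : ℕ) :
    #{j | rotate d b j ≤ l} =
      countBelow d (b + l + 1) - countBelow d b + countBelow d (min (b : ℕ) (b + l + 1 - N)) := by
  have hsplit : (univ.filter fun j => rotate d b j ≤ l) =
      (univ.filter fun j => (b : ℕ) ≤ d j ∧ (d j : ℕ) < b + l + 1) ∪
        univ.filter fun j => (d j : ℕ) < min (b : ℕ) (b + l + 1 - N) := by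
    ext j
    simp only [mem_filter, mem_univ, true_and, mem_union, rotate, Fin.val_sub_eq_ite, Fin.le_def]
    have := (d j).isLt
    split_ifs <;> omega
  rw [hsplit, card_union_of_disjoint, ← countBelow_sub_countBelow d (by omega)]
  · rfl
  · exact disjoint_filter.2 fun j _ h h' => by omega

/-- `complementEnum m i` enumerates `{1, …, i} ∪ {i + m + 1, i + m + 2, …}` increasingly,
starting from index `0`. -/
def complementEnum (m i j : ℕ) : ℕ := if j + 1 ≤ i then j + 1 else j + 1 + m

theorem complementEnum_mono (m i : ℕ) : Monotone (complementEnum m i) := by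
  intro a b hab
  unfold complementEnum
  split_ifs <;> omega

theorem card_complementEnum_le {k m i : ℕ} (hi : i ≤ k) (l : ℕ) :
    #{j : Fin k | complementEnum m i j ≤ l} = min i l + (min k (l - m) - i) := by
  have hsplit : (univ.filter fun j : Fin k => complementEnum m i j ≤ l).map Fin.valEmbedding =
      range (min i l) ∪ Ico i (min k (l - m)) := by
    ext x
    simp only [mem_map, mem_filter, mem_univ, true_and, Fin.valEmbedding_apply, mem_union,
      mem_range, mem_Ico]
    constructor
    · rintro ⟨j, hj, rfl⟩
      unfold complementEnum at hj
      split_ifs at hj <;> omega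
    · intro hx
      exact ⟨⟨x, by omega⟩, by simp only [complementEnum]; split_ifs <;> omega, rfl⟩
  rw [← card_map, hsplit, card_union_of_disjoint, card_range, Nat.card_Ico]
  exact disjoint_left.2 fun x hx hx' => by simp only [mem_range, mem_Ico] at hx hx'; omega

def parkingCompletions (k m i : ℕ) : Set (Fin k → ℕ) :=
  {c | ∃ σ : Equiv.Perm (Fin k), Monotone (c ∘ σ) ∧
    ∀ j, 1 ≤ c (σ j) ∧ c (σ j) ≤ complementEnum m i j}

theorem mem_parkingCompletions_iff {k m i : ℕ} (hi : i ≤ k) (c : Fin k → ℕ) :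
    c ∈ parkingCompletions k m i ↔
      (∀ j, 1 ≤ c j) ∧ ∀ l, min i l + (min k (l - m) - i) ≤ #{j | c j ≤ l} := by
  have hu : Monotone fun j : Fin k => complementEnum m i j :=
    (complementEnum_mono m i).comp fun _ _ h => h
  simp only [← card_complementEnum_le (m := m) hi, ← exists_perm_monotone_le_iff c _ hu,
    parkingCompletions, Set.mem_ofPred_eq, forall_and]
  constructor
  · rintro ⟨σ, hmono, hpos, hle⟩
    exact ⟨σ.surjective.forall.2 hpos, σ, hmono, hle⟩
  · rintro ⟨hpos, σ, hmono, hle⟩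
    exact ⟨σ, hmono, fun j => hpos (σ j), hle⟩

theorem lt_of_mem_parkingCompletions {k m i : ℕ} {c : Fin k → ℕ}
    (hc : c ∈ parkingCompletions k m i) (j : Fin k) : c j < k + m + 1 := by
  obtain ⟨σ, -, hle⟩ := hc
  have hcj := (hle (σ.symm j)).2
  rw [σ.apply_symm_apply] at hcj
  have := (σ.symm j).isLt
  unfold complementEnum at hcj
  split_ifs at hcj <;> omega

/-- Rotating by `startSpot k m i` sends the spots `k + 1, …, k + m` to the block
`i + 1, …, i + m`, and the spot `k - i` to `0`. -/
def startSpot (k m i : ℕ) : Fin (k + m + 1) := ⟨k - i, by omega⟩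

theorem rotate_mem_parkingCompletions_iff {k m i : ℕ} (hi : i ≤ k)
    (d : Fin k → Fin (k + m + 1)) :
    rotate d (startSpot k m i) ∈ parkingCompletions k m i ↔
      IsLeastArgmin (surplus (countBelow d) k) (k + m + 1) (k - i + 1) := by
  have hDN : ∀ t, k + m + 1 ≤ t → countBelow d t = k := fun t ht => by
    rw [countBelow_of_le d ht, Fintype.card_fin]
  have hcount := card_rotate_le d (startSpot k m i)
  rw [show (startSpot k m i : ℕ) = k - i from rfl] at hcount
  have hfree : #{j | rotate d (startSpot k m i) j ≤ 0} =
      countBelow d (k - i + 1) - countBelow d (k - i) := by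
    rw [hcount, show min (k - i) (k - i + 0 + 1 - (k + m + 1)) = 0 by omega, countBelow_zero]
    rfl
  rw [mem_parkingCompletions_iff hi, isLeastArgmin_surplus_iff (countBelow_mono d)
    (countBelow_zero d) hDN (show i + (k - i) = k by omega), ← Nat.sub_eq_zero_iff_le, ← hfree,
    card_eq_zero, filter_eq_empty_iff]
  simp only [hcount, Nat.one_le_iff_ne_zero, Nat.le_zero, mem_univ, true_implies]

theorem existsUnique_rotate_mem_parkingCompletions (k m : ℕ) (d : Fin k → Fin (k + m + 1)) :
    ∃! i, i ≤ k ∧ rotate d (startSpot k m i) ∈ parkingCompletions k m i := by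
  have hDN : countBelow d (k + m + 1) = k := by rw [countBelow_of_le d le_rfl, Fintype.card_fin]
  obtain ⟨r, hr, hr_unique⟩ := existsUnique_isLeastArgmin (surplus (countBelow d) k) (k + m + 1)
  obtain ⟨hr1, hrk⟩ :=
    isLeastArgmin_surplus_bounds (countBelow_mono d) (countBelow_zero d) hDN hr
  refine ⟨k + 1 - r, ⟨by omega, (rotate_mem_parkingCompletions_iff (by omega) d).2 ?_⟩, ?_⟩
  · rwa [show k - (k + 1 - r) + 1 = r by omega]
  · rintro i ⟨hi, hmem⟩
    have := hr_unique _ ((rotate_mem_parkingCompletions_iff hi d).1 hmem)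
    omega

theorem natCard_parkingCompletions (k m i : ℕ) :
    Nat.card (parkingCompletions k m i) = Nat.card
      {d : Fin k → Fin (k + m + 1) // rotate d (startSpot k m i) ∈ parkingCompletions k m i} :=
  let b := startSpot k m i
  Nat.card_congr
    { toFun := fun c => ⟨fun j => ⟨c.1 j, lt_of_mem_parkingCompletions c.2 j⟩ + b, by
        rw [rotate_add_right]; exact c.2⟩
      invFun := fun d => ⟨rotate d.1 b, d.2⟩
      left_inv := fun c => by ext j; simp [rotate]
      right_inv := fun d => by ext j; simp [rotate] }

theorem sum_natCard_parkingCompletions (k m : ℕ) :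
    ∑ i ∈ range (k + 1), Nat.card (parkingCompletions k m i) = (k + m + 1) ^ k := by
  classical
  simp only [natCard_parkingCompletions, Nat.card_eq_fintype_card, Fintype.card_subtype]
  calc ∑ i ∈ range (k + 1), #{d | rotate d (startSpot k m i) ∈ parkingCompletions k m i}
      = ∑ d : Fin k → Fin (k + m + 1),
          #{i ∈ range (k + 1) | rotate d (startSpot k m i) ∈ parkingCompletions k m i} :=
        sum_card_bipartiteAbove_eq_sum_card_bipartiteBelow _
    _ = ∑ _d : Fin k → Fin (k + m + 1), 1 := sum_congr rfl fun d _ =>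
        card_eq_one_iff_existsUnique.2 <| by
          simpa only [mem_filter, mem_range, Nat.lt_succ_iff]
            using existsUnique_rotate_mem_parkingCompletions k m d
    _ = (k + m + 1) ^ k := by simp

end ParkingCompletion

theorem stmt9_general (n m : ℕ) (hmn : m ≤ n) :
    ∑ i ∈ Finset.range (n - m + 1),
      Nat.card {c : Fin (n - m) → ℕ | ∃ σ : Equiv.Perm (Fin (n - m)),
        Monotone (c ∘ σ) ∧ ∀ j, 1 ≤ c (σ j) ∧
          c (σ j) ≤ (if j.1 + 1 ≤ i then j.1 + 1 else j.1 + 1 + m)} =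
      (n + 1) ^ (n - m) :=
  calc _ = (n - m + m + 1) ^ (n - m) :=
        ParkingCompletion.sum_natCard_parkingCompletions (n - m) m
    _ = (n + 1) ^ (n - m) := by rw [Nat.sub_add_cancel hmn]

/-- Proposition 4.5: for `1 ≤ m ≤ n`, summing the number of parking completions
of the block `(i+1, …, i+m)` in `[n]` (encoded via the complement enumeration
`u j = j` for `j ≤ i`, `u j = j + m` for `j > i`) over `i = 0, …, n - m`
gives `(n+1)^{n-m}`. -/
theorem stmt9 (n m : ℕ) (hm : 1 ≤ m) (hmn : m ≤ n) :
    ∑ i ∈ Finset.range (n - m + 1),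
      Nat.card {c : Fin (n - m) → ℕ | ∃ σ : Equiv.Perm (Fin (n - m)),
        Monotone (c ∘ σ) ∧ ∀ j, 1 ≤ c (σ j) ∧
          c (σ j) ≤ (if j.1 + 1 ≤ i then j.1 + 1 else j.1 + 1 + m)} =
      (n + 1) ^ (n - m) :=
  stmt9_general n m hmn
end

section
/- For ℓ ≤ n, the number of parking completions of t = (1, 2, ..., ℓ) in [n] equals (ℓ+1)·(n+1)^{n−ℓ−1}. -/
/-!
Subtracting one from every entry turns a parking completion of `(1, …, ℓ)` in `[n]` into a
sequence of `m = n - ℓ` preferred spots on the circle `Fin (n + 1)` under which the last spot stays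
free. By Pollak's cyclic argument, exactly `n + 1 - m = ℓ + 1` of the `n + 1` rotations of any
preference sequence leave the last spot free, so the count is `(ℓ + 1) (n + 1)^m / (n + 1)`.

For the rotation count, consider the walk `w ↦ w - #{cars preferring a spot < w (mod n + 1)}`.
Rotating by `a` leaves the last spot free iff the walk has a strict record at `2(n + 1) - a`.
The walk climbs by at most one per step and gains `n + 1 - m` per period, so its running maximum
shows that every period contains exactly `n + 1 - m` strict records.
-/

open Finset

namespace ParkingCompletion

section Records

variable {g : ℕ → ℤ}

def IsStrictRecord (g : ℕ → ℤ) (w : ℕ) : Prop := ∀ j < w, g j < g w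

instance (g : ℕ → ℤ) (w : ℕ) : Decidable (IsStrictRecord g w) := Nat.decidableBallLT _ _

def runningMax (g : ℕ → ℤ) (w : ℕ) : ℤ := (range (w + 1)).sup' nonempty_range_add_one g

lemma le_runningMax {j w : ℕ} (h : j ≤ w) : g j ≤ runningMax g w :=
  le_sup' g (mem_range.2 (Nat.lt_succ_of_le h))

lemma runningMax_le {w : ℕ} {x : ℤ} (h : ∀ j ≤ w, g j ≤ x) : runningMax g w ≤ x :=
  sup'_le _ _ fun j hj => h j (Nat.le_of_lt_succ (mem_range.1 hj))

lemma exists_eq_runningMax (g : ℕ → ℤ) (w : ℕ) : ∃ j ≤ w, g j = runningMax g w := by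
  obtain ⟨j, hj, hjmax⟩ := exists_mem_eq_sup' nonempty_range_add_one g
  exact ⟨j, Nat.le_of_lt_succ (mem_range.1 hj), hjmax.symm⟩

lemma runningMax_succ (g : ℕ → ℤ) (w : ℕ) :
    runningMax g (w + 1) = max (g (w + 1)) (runningMax g w) := by
  simp only [runningMax, range_add_one (n := w + 1)]
  exact sup'_insert (f := g) (H := nonempty_range_add_one)

lemma runningMax_succ_eq (hstep : ∀ w, g (w + 1) ≤ g w + 1) (w : ℕ) :
    runningMax g (w + 1) = runningMax g w + if IsStrictRecord g (w + 1) then 1 else 0 := by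
  rw [runningMax_succ]
  split_ifs with hrec
  · have hlt : runningMax g w ≤ g (w + 1) - 1 :=
      runningMax_le fun j hj => by have := hrec j (by omega); omega
    have := hstep w
    have := le_runningMax (g := g) (le_refl w)
    omega
  · obtain ⟨j, hj, hle⟩ : ∃ j < w + 1, g (w + 1) ≤ g j := by
      simpa [IsStrictRecord] using hrec
    have := le_runningMax (g := g) (Nat.le_of_lt_succ hj)
    omega

lemma runningMax_add (hstep : ∀ w, g (w + 1) ≤ g w + 1) (s t : ℕ) :
    runningMax g (s + t) = runningMax g s + #{w ∈ Ioc s (s + t) | IsStrictRecord g w} := by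
  induction t with
  | zero => simp
  | succ t ih =>
    rw [← add_assoc, runningMax_succ_eq hstep, ih, card_filter, card_filter,
      sum_Ioc_succ_top (Nat.le_add_right s t)]
    push_cast
    ring

variable {N D : ℕ} (hper : ∀ w, g (w + N) = g w + D)
include hper

lemma apply_add_mul_period (w q : ℕ) : g (w + q * N) = g w + q * D := by
  induction q with
  | zero => simp
  | succ q ih => rw [add_one_mul, ← add_assoc, hper, ih]; push_cast; ring

lemma runningMax_add_period {s : ℕ} (hs : N ≤ s + 1) :
    runningMax g (s + N) = runningMax g s + D := by
  apply le_antisymm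
  · refine runningMax_le fun j hj => ?_
    rcases le_or_gt N j with hNj | hjN
    · have := hper (j - N)
      rw [Nat.sub_add_cancel hNj] at this
      have := le_runningMax (g := g) (show j - N ≤ s by omega)
      omega
    · have := le_runningMax (g := g) (show j ≤ s by omega)
      omega
  · obtain ⟨j, hj, hjmax⟩ := exists_eq_runningMax g s
    rw [← hjmax, ← hper]
    exact le_runningMax (by omega)

lemma card_isStrictRecord_Ioc (hstep : ∀ w, g (w + 1) ≤ g w + 1) {s : ℕ} (hs : N ≤ s + 1) :
    #{w ∈ Ioc s (s + N) | IsStrictRecord g w} = D := by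
  have := runningMax_add hstep s N
  rw [runningMax_add_period hper hs] at this
  omega

lemma isStrictRecord_iff_of_periodic (hN : 0 < N) {w : ℕ} :
    IsStrictRecord g w ↔ ∀ j < w, w ≤ j + N → g j < g w := by
  refine ⟨fun h j hj _ => h j hj, fun h j hj => ?_⟩
  -- move `j` forward by whole periods into the window `[w - N, w)`
  set q := (w - 1 - j) / N
  have hq : q * N ≤ w - 1 - j := Nat.div_mul_le_self _ _
  have hq' : w - 1 - j < (q + 1) * N := by
    rw [add_one_mul]; exact Nat.lt_div_mul_add hN
  have hgj : g j ≤ g (j + q * N) := by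
    rw [apply_add_mul_period hper]; have : (0 : ℤ) ≤ q * D := by positivity
    omega
  have := h (j + q * N) (by omega) (by rw [add_one_mul] at hq'; omega)
  omega

end Records

section Walk

def walk (f : ℕ → ℕ) (w : ℕ) : ℤ := w - ∑ v ∈ range w, (f v : ℤ)

lemma walk_succ (f : ℕ → ℕ) (w : ℕ) : walk f (w + 1) = walk f w + 1 - f w := by
  simp only [walk, sum_range_succ]
  push_cast
  ring

lemma walk_sub_walk (f : ℕ → ℕ) {a b : ℕ} (h : a ≤ b) :
    walk f b - walk f a = (b - a : ℤ) - ∑ v ∈ Ico a b, (f v : ℤ) := by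
  simp only [walk, ← sum_range_add_sum_Ico _ h]
  ring

lemma walk_add_period {f : ℕ → ℕ} {N D : ℕ} (hf : ∀ v, f (v + N) = f v)
    (hsum : ∑ v ∈ range N, f v + D = N) (w : ℕ) : walk f (w + N) = walk f w + D := by
  induction w with
  | zero =>
    simp only [walk, zero_add, CharP.cast_eq_zero, range_zero, sum_empty, sub_zero]
    have := congrArg (Nat.cast : ℕ → ℤ) hsum
    push_cast at this
    omega
  | succ w ih =>
    rw [add_right_comm, walk_succ, ih, hf, walk_succ]
    ring

end Walk

section Shifts

variable {m N : ℕ}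

/-- `LastSpotFree d` says that `m` cars with preferred spots `d i` on the one-way street
`0, …, N - 1` all park before the last spot, which stays empty: at most `N - 1 - k` cars may
prefer a spot `≥ k`. -/
def LastSpotFree (d : Fin m → Fin N) : Prop := ∀ k < N, #{i | k ≤ (d i : ℕ)} + k < N

instance (d : Fin m → Fin N) : Decidable (LastSpotFree d) := Nat.decidableBallLT _ _

def valueCount (e : Fin m → Fin N) (v : ℕ) : ℕ := #{i | (e i : ℕ) = v % N}

lemma valueCount_add_period (e : Fin m → Fin N) (v : ℕ) :
    valueCount e (v + N) = valueCount e v := by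
  simp [valueCount]

lemma sum_range_valueCount (e : Fin m → Fin N) : ∑ v ∈ range N, valueCount e v = m := by
  have := card_eq_sum_card_fiberwise (s := univ) (f := fun i => (e i : ℕ)) (t := range N)
    fun i _ => by simp
  rw [card_univ, Fintype.card_fin] at this
  refine (sum_congr rfl fun v hv => ?_).trans this.symm
  simp [valueCount, Nat.mod_eq_of_lt (mem_range.1 hv)]

lemma card_le_add_eq_sum_valueCount (e : Fin m → Fin N) (a : Fin N) {k : ℕ} :
    #{i | k ≤ ((e i + a : Fin N) : ℕ)} = ∑ v ∈ Ico (k + (N - a)) (N + (N - a)), valueCount e v := by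
  have : NeZero N := NeZero.of_pos a.pos
  rw [← sum_Ico_add', card_eq_sum_card_fiberwise (f := fun i => ((e i + a : Fin N) : ℕ))
    (t := Ico k N) fun i hi => by simpa using (mem_filter.1 hi).2]
  refine sum_congr rfl fun v hv => ?_
  have hvN : v < N := (mem_Ico.1 hv).2
  have hfiber : ∀ i, ((e i + a : Fin N) : ℕ) = v ↔ (e i : ℕ) = (v + (N - a)) % N := fun i => by
    rw [← Fin.val_mk hvN, ← Fin.ext_iff, ← eq_sub_iff_add_eq, Fin.ext_iff, Fin.val_sub, add_comm]
  simp only [valueCount, filter_filter]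
  congr 1
  ext i
  simp only [mem_filter, mem_univ, true_and, ← hfiber]
  exact ⟨And.right, fun h => ⟨h ▸ (mem_Ico.1 hv).1, h⟩⟩

lemma walk_valueCount_add_period (e : Fin m → Fin N) (hm : m ≤ N) (w : ℕ) :
    walk (valueCount e) (w + N) = walk (valueCount e) w + (N - m : ℕ) :=
  walk_add_period (valueCount_add_period e) (by rw [sum_range_valueCount]; omega) w

lemma lastSpotFree_add_iff (e : Fin m → Fin N) (hm : m < N) (a : Fin N) :
    LastSpotFree (fun i => e i + a) ↔ IsStrictRecord (walk (valueCount e)) (N + (N - a)) := by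
  have hcount : ∀ k < N, #{i | k ≤ ((e i + a : Fin N) : ℕ)} + k < N ↔
      walk (valueCount e) (k + (N - a)) < walk (valueCount e) (N + (N - a)) := fun k hk => by
    have := walk_sub_walk (valueCount e) (show k + (N - a) ≤ N + (N - a) by omega)
    rw [← Nat.cast_sum] at this
    rw [card_le_add_eq_sum_valueCount]
    omega
  rw [isStrictRecord_iff_of_periodic (walk_valueCount_add_period e hm.le) (by omega)]
  constructor
  · intro h j hj hwin
    have := (hcount (j - (N - a)) (by omega)).1 (h (j - (N - a)) (by omega))
    rwa [Nat.sub_add_cancel (by omega)] at this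
  · intro h k hk
    exact (hcount k hk).2 (h (k + (N - a)) (by omega) (by omega))

lemma card_lastSpotFree_add (e : Fin m → Fin N) (hm : m < N) :
    #{a : Fin N | LastSpotFree fun i => e i + a} = N - m := by
  have hstep (w : ℕ) : walk (valueCount e) (w + 1) ≤ walk (valueCount e) w + 1 := by
    rw [walk_succ]; omega
  rw [← card_isStrictRecord_Ioc (walk_valueCount_add_period e hm.le) hstep (s := N) (by omega)]
  refine card_bij (fun a _ => N + (N - a)) (fun a ha => ?_) (fun a _ a' _ h => ?_) fun w hw => ?_
  · simp only [mem_filter, mem_univ, true_and, mem_Ioc] at ha ⊢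
    exact ⟨⟨by omega, by omega⟩, (lastSpotFree_add_iff e hm a).1 ha⟩
  · exact Fin.ext (by omega)
  · simp only [mem_filter, mem_Ioc] at hw
    refine ⟨⟨N + N - w, by omega⟩, ?_, by simp only; omega⟩
    simp only [mem_filter, mem_univ, true_and, lastSpotFree_add_iff e hm]
    convert hw.2 using 2
    omega

theorem card_lastSpotFree_mul (hm : m < N) :
    #{d : Fin m → Fin N | LastSpotFree d} * N = (N - m) * N ^ m := by
  have : NeZero N := ⟨by omega⟩
  have hshift (a : Fin N) :
      #{d : Fin m → Fin N | LastSpotFree fun i => d i + a} = #{d | LastSpotFree d} :=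
    card_equiv (Equiv.addRight fun _ => a) fun d => by
      simp only [mem_filter, mem_univ, true_and, Equiv.coe_addRight]; rfl
  calc #{d : Fin m → Fin N | LastSpotFree d} * N
      = ∑ a : Fin N, #{d : Fin m → Fin N | LastSpotFree fun i => d i + a} := by
        simp [hshift, mul_comm]
    _ = ∑ d : Fin m → Fin N, #{a : Fin N | LastSpotFree fun i => d i + a} := by
        simp only [card_filter]; exact sum_comm
    _ = (N - m) * N ^ m := by
        simp [card_lastSpotFree_add _ hm, mul_comm]

end Shifts

lemma exists_perm_monotone_le_add_iff {m : ℕ} (c : Fin m → ℕ) (L : ℕ) :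
    (∃ σ : Equiv.Perm (Fin m), Monotone (c ∘ σ) ∧ ∀ i, c (σ i) ≤ L + i) ↔
      ∀ k < m, #{i | L + k < c i} + k < m := by
  constructor
  · rintro ⟨σ, -, hle⟩ k hk
    have hσ : #{i | L + k < c i} = #{j | L + k < c (σ j)} :=
      card_equiv σ.symm fun i => by simp
    have hsub : ({j | L + k < c (σ j)} : Finset (Fin m)) ⊆ Ioi ⟨k, hk⟩ := fun j hj => by
      have := hle j
      simp only [mem_filter, mem_univ, true_and] at hj
      simp only [mem_Ioi, Fin.lt_def]
      omega
    have := card_le_card hsub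
    rw [Fin.card_Ioi, Fin.val_mk] at this
    omega
  · intro hcount
    refine ⟨Tuple.sort c, Tuple.monotone_sort c, fun i => ?_⟩
    by_contra! hlt
    have hsub : Ici i ⊆ ({j | L + i < c (Tuple.sort c j)} : Finset (Fin m)) := fun j hj => by
      have := Tuple.monotone_sort c (mem_Ici.1 hj)
      simp only [Function.comp_apply] at this
      simp only [mem_filter, mem_univ, true_and]
      omega
    have hsort : #{j | L + i < c (Tuple.sort c j)} = #{j | L + i < c j} :=
      card_equiv (Tuple.sort c) fun j => by simp
    have := card_le_card hsub
    rw [Fin.card_Ici, hsort] at this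
    have := hcount i i.2
    omega

lemma lastSpotFree_iff {l m : ℕ} (e : Fin m → Fin (l + m + 1)) :
    LastSpotFree e ↔ ∀ k < m, #{i | l + k < (e i : ℕ)} + k < m := by
  constructor
  · intro h k hk
    have := h (l + k + 1) (by omega)
    simp only [← Nat.lt_iff_add_one_le] at this
    omega
  · intro h k hk
    rcases le_or_gt k l with hkl | hlk
    · have := card_filter_le (univ : Finset (Fin m)) fun i => k ≤ (e i : ℕ)
      rw [card_univ, Fintype.card_fin] at this
      omega
    · obtain ⟨j, rfl⟩ : ∃ j, k = l + j + 1 := ⟨k - l - 1, by omega⟩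
      have := h j (by omega)
      simp only [← Nat.lt_iff_add_one_le]
      omega

lemma parkingCompletion_iff {l m : ℕ} (c : Fin m → ℕ) :
    (∃ σ : Equiv.Perm (Fin m), Monotone (c ∘ σ) ∧ ∀ i, 1 ≤ c (σ i) ∧ c (σ i) ≤ l + i.1 + 1) ↔
      ∃ e : Fin m → Fin (l + m + 1), LastSpotFree e ∧ (fun i => (e i : ℕ) + 1) = c := by
  constructor
  · rintro ⟨σ, hmono, hbound⟩
    have hc (i : Fin m) : 1 ≤ c i ∧ c i < l + m + 1 := by
      have := hbound (σ.symm i)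
      simp only [Equiv.apply_symm_apply] at this
      omega
    refine ⟨fun i => ⟨c i - 1, by have := hc i; omega⟩, ?_, funext fun i => by
      have := hc i; simp only; omega⟩
    rw [lastSpotFree_iff, ← exists_perm_monotone_le_add_iff]
    exact ⟨σ, fun i j hij => Nat.sub_le_sub_right (hmono hij) 1,
      fun i => by have := hbound i; simp only; omega⟩
  · rintro ⟨e, he, rfl⟩
    rw [lastSpotFree_iff, ← exists_perm_monotone_le_add_iff] at he
    obtain ⟨σ, hmono, hle⟩ := he
    exact ⟨σ, fun i j hij => Nat.add_le_add_right (hmono hij) 1,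
      fun i => ⟨by simp, by have := hle i; simp only; omega⟩⟩

theorem card_parkingCompletions (l m : ℕ) :
    Nat.card {c : Fin m → ℕ | ∃ σ : Equiv.Perm (Fin m),
        Monotone (c ∘ σ) ∧ ∀ i, 1 ≤ c (σ i) ∧ c (σ i) ≤ l + i.1 + 1} =
      #{e : Fin m → Fin (l + m + 1) | LastSpotFree e} := by
  have hinj : Function.Injective fun (e : Fin m → Fin (l + m + 1)) i => (e i : ℕ) + 1 :=
    fun e e' h => funext fun i => Fin.ext (by simpa using congrFun h i)
  have hset : {c : Fin m → ℕ | ∃ σ : Equiv.Perm (Fin m),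
        Monotone (c ∘ σ) ∧ ∀ i, 1 ≤ c (σ i) ∧ c (σ i) ≤ l + i.1 + 1} =
      (fun e i => (e i : ℕ) + 1) '' {e : Fin m → Fin (l + m + 1) | LastSpotFree e} := by
    ext c
    simp [parkingCompletion_iff]
  rw [Nat.card_coe_set_eq, hset, Set.ncard_image_of_injective _ hinj, Set.ncard_eq_toFinset_card']
  simp

end ParkingCompletion

/-- Gessel–Seo (equation (4.2)): for `ℓ ≤ n`, the number of parking completions
of `t = (1, 2, …, ℓ)` in `[n]` (sequences `c ∈ [n]^{n-ℓ}` whose weakly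
increasing rearrangement satisfies `c'_i ≤ ℓ + i`) equals
`(ℓ+1)(n+1)^{n-ℓ-1}` (an integer exponent, equal to `-1` when `ℓ = n`). -/
theorem stmt11 (n l : ℕ) (hl : l ≤ n) :
    (Nat.card {c : Fin (n - l) → ℕ | ∃ σ : Equiv.Perm (Fin (n - l)),
        Monotone (c ∘ σ) ∧ ∀ i, 1 ≤ c (σ i) ∧ c (σ i) ≤ l + i.1 + 1} : ℚ) =
      ((l : ℚ) + 1) * ((n : ℚ) + 1) ^ ((n : ℤ) - l - 1) := by
  have hcount :=
    ParkingCompletion.card_lastSpotFree_mul (m := n - l) (N := l + (n - l) + 1) (by omega)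
  rw [← ParkingCompletion.card_parkingCompletions, show l + (n - l) = n by omega,
    show n + 1 - (n - l) = l + 1 by omega] at hcount
  have hN : (n : ℚ) + 1 ≠ 0 := by positivity
  rw [show (n : ℤ) - l - 1 = ((n - l : ℕ) : ℤ) - 1 by omega, zpow_sub_one₀ hN,
    zpow_natCast, ← mul_assoc, eq_mul_inv_iff_mul_eq₀ hN]
  exact_mod_cast hcount
end

section
/- The number of increasing parking completions of t in [n] equals det[ binom(u_{n−m+1−i}, i−j+1) ]_{i,j=1}^{n−m}, where u_1 < ... < u_{n−m} are the elements of [n] not in t. -/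
/-!
Both sides satisfy the same recursion in a weakly increasing bound vector `u`, so they agree by
induction on `∑ u`. If `u_N = v + 1`, a completion `c` has either `c_N ≤ v`, and then it is a
completion of `min u v`, or `c_N = v + 1`, and then it is a completion of `(u_1, …, u_{N-1})`
extended by `v + 1`. On the determinant side, Pascal's rule splits the row of `u_N` into the row
of `v` and the unit row `e_1`; with the unit row the determinant is the minor of
`(u_1, …, u_{N-1})`. Lowering the other entries equal to `v + 1` to `v`, from right to left,
leaves the determinant unchanged: each time Pascal's rule splits off a copy of the neighbouring
row. If `u_N = 0` both sides vanish.
-/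

open Matrix Function

theorem Fin.monotone_snoc {α : Type*} [Preorder α] {k : ℕ} {d : Fin k → α} {x : α}
    (hd : Monotone d) (hx : ∀ i, d i ≤ x) : Monotone (Fin.snoc d x : Fin (k + 1) → α) := by
  intro a b hab
  cases b using Fin.lastCases with
  | last => cases a using Fin.lastCases <;> simp [hx]
  | cast b =>
    cases a using Fin.lastCases with
    | last => exact absurd hab (Fin.castSucc_lt_last b).not_ge
    | cast a => simpa using hd (Fin.castSucc_le_castSucc_iff.1 hab)

theorem det_updateRow_zero_single {R : Type*} [CommRing R] {k : ℕ}
    (A : Matrix (Fin (k + 1)) (Fin (k + 1)) R) :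
    (A.updateRow 0 (Pi.single 0 1)).det = (A.submatrix Fin.succ Fin.succ).det := by
  have hminor : (A.updateRow 0 (Pi.single 0 1)).submatrix Fin.succ Fin.succ =
      A.submatrix Fin.succ Fin.succ := by
    ext i j
    simp
  rw [det_succ_row_zero, Fin.sum_univ_succ]
  simp [hminor, Fin.succ_ne_zero]

def binomialRow (N s v : ℕ) : Fin N → ℤ :=
  fun j => if j.1 ≤ s then (v.choose (s - j.1) : ℤ) else 0

theorem binomialRow_succ_succ (N s v : ℕ) :
    binomialRow N (s + 1) (v + 1) = binomialRow N (s + 1) v + binomialRow N s v := by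
  funext j
  simp only [binomialRow, Pi.add_apply]
  split_ifs with h₁ h₂ <;> try omega
  · rw [show s + 1 - j.1 = s - j.1 + 1 by omega, Nat.choose_succ_succ, Nat.cast_add, add_comm]
  · simp [show s + 1 - j.1 = 0 by omega]

theorem binomialRow_zero (k v : ℕ) : binomialRow (k + 1) 0 v = Pi.single 0 1 := by
  funext j
  cases j using Fin.cases <;> simp [binomialRow, Fin.succ_ne_zero]

variable {N : ℕ}

def parkingCompletions (u : Fin N → ℕ) : Set (Fin N → ℕ) :=
  {c | Monotone c ∧ ∀ i, 1 ≤ c i ∧ c i ≤ u i}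

def parkingMatrix (u : Fin N → ℕ) : Matrix (Fin N) (Fin N) ℤ :=
  Matrix.of fun i => binomialRow N (i.1 + 1) (u i.rev)

theorem parkingMatrix_row (u : Fin N → ℕ) (i : Fin N) :
    parkingMatrix u i = binomialRow N (i.1 + 1) (u i.rev) :=
  rfl

theorem parkingMatrix_eq_updateRow (u : Fin N → ℕ) (p : Fin N) (v : ℕ) :
    parkingMatrix u =
      (parkingMatrix (update u p v)).updateRow p.rev (binomialRow N (p.rev + 1) (u p)) := by
  ext i : 1
  rcases eq_or_ne i p.rev with rfl | hi
  · simp [parkingMatrix]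
  · rw [updateRow_ne hi]
    simp [parkingMatrix, update_of_ne (Fin.rev_eq_iff.not.mpr hi)]

theorem det_parkingMatrix_update_of_eq_succ (w : Fin N → ℕ) {p q : Fin N} (hq : q.1 = p.1 + 1)
    (hw : w p = w q + 1) :
    (parkingMatrix (update w p (w q))).det = (parkingMatrix w).det := by
  set B := parkingMatrix (update w p (w q))
  have hqp : q ≠ p := fun h => by rw [h] at hq; omega
  have hrev : p.rev.1 = q.rev.1 + 1 := by simp only [Fin.val_rev]; omega
  have hBp : B p.rev = binomialRow N (p.rev + 1) (w q) := by
    simp only [B, parkingMatrix_row, Fin.rev_rev, update_self]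
  have hBq : B q.rev = binomialRow N p.rev (w q) := by
    simp only [B, parkingMatrix_row, Fin.rev_rev, update_of_ne hqp, hrev]
  rw [parkingMatrix_eq_updateRow w p (w q), hw, binomialRow_succ_succ, ← hBp, ← hBq,
    det_updateRow_add_self B (Fin.rev_injective.ne hqp.symm)]

theorem det_parkingMatrix_eq_update_add_init {k v : ℕ} (u : Fin (k + 1) → ℕ)
    (hv : u (Fin.last k) = v + 1) :
    (parkingMatrix u).det =
      (parkingMatrix (update u (Fin.last k) v)).det + (parkingMatrix (Fin.init u)).det := by
  set B := parkingMatrix (update u (Fin.last k) v)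
  have hB0 : B 0 = binomialRow (k + 1) ((0 : Fin (k + 1)) + 1) v := by
    simp only [B, parkingMatrix_row, Fin.rev_zero, update_self]
  have hminor : B.submatrix Fin.succ Fin.succ = parkingMatrix (Fin.init u) := by
    ext i j
    simp [B, parkingMatrix, binomialRow, Fin.rev_succ, Fin.init]
  rw [parkingMatrix_eq_updateRow u (Fin.last k) v, Fin.rev_last, hv, binomialRow_succ_succ,
    det_updateRow_add, ← hB0, updateRow_eq_self, Fin.val_zero, binomialRow_zero,
    det_updateRow_zero_single, hminor]

theorem det_parkingMatrix_update_last {k v : ℕ} (u : Fin (k + 1) → ℕ) (hu : Monotone u)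
    (hv : u (Fin.last k) = v + 1) :
    (parkingMatrix (update u (Fin.last k) v)).det = (parkingMatrix fun i => min (u i) v).det := by
  -- `W j` caps `u` at `v` from index `j` on; passing from `W (j + 1)` to `W j` either changes
  -- nothing or lowers `v + 1` to `v` just left of an entry already equal to `v`.
  let W : ℕ → Fin (k + 1) → ℕ := fun j i => if j ≤ i.1 then min (u i) v else u i
  have hW0 : W 0 = fun i => min (u i) v := by simp [W]
  have hWk : W k = update u (Fin.last k) v := by
    funext i
    rcases Fin.eq_castSucc_or_eq_last i with ⟨i, rfl⟩ | rfl
    · simp [W, Fin.castSucc_ne_last]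
    · simp [W, hv]
  have hstep : ∀ j < k, (parkingMatrix (W (j + 1))).det = (parkingMatrix (W j)).det := by
    intro j hj
    let p : Fin (k + 1) := ⟨j, by omega⟩
    let q : Fin (k + 1) := ⟨j + 1, by omega⟩
    have hW_ne : ∀ i, i ≠ p → W j i = W (j + 1) i := by
      intro i hi
      have : i.1 ≠ j := fun h => hi (Fin.ext h)
      simp only [W, show j ≤ i.1 ↔ j + 1 ≤ i.1 by omega]
    by_cases hup : u p = v + 1
    · have hWq : W (j + 1) q = v := by
        have : v + 1 ≤ u q := hup ▸ hu (Fin.mk_le_mk.2 (Nat.le_succ j))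
        rw [show W (j + 1) q = min (u q) v from if_pos le_rfl]
        omega
      have hWp : W (j + 1) p = W (j + 1) q + 1 := by simp [W, p, hWq, hup]
      have : W j = update (W (j + 1)) p (W (j + 1) q) := by
        funext i
        rcases eq_or_ne i p with rfl | hi
        · simp [W, hWq, p, hup]
        · rw [update_of_ne hi, hW_ne i hi]
      rw [this, det_parkingMatrix_update_of_eq_succ _ rfl hWp]
    · have hup : u p ≤ v := by have := hu (Fin.le_last p); omega
      congr 2
      funext i
      rcases eq_or_ne i p with rfl | hi
      · simp [W, p, hup]
      · exact (hW_ne i hi).symm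
  have hchain : ∀ j ≤ k, (parkingMatrix (W j)).det = (parkingMatrix (W 0)).det := by
    intro j hj
    induction j with
    | zero => rfl
    | succ j ih => rw [hstep j hj, ih (by omega)]
  rw [← hWk, ← hW0, hchain k le_rfl]

theorem det_parkingMatrix_eq_min_add_init {k v : ℕ} (u : Fin (k + 1) → ℕ) (hu : Monotone u)
    (hv : u (Fin.last k) = v + 1) :
    (parkingMatrix u).det =
      (parkingMatrix fun i => min (u i) v).det + (parkingMatrix (Fin.init u)).det := by
  rw [det_parkingMatrix_eq_update_add_init u hv, det_parkingMatrix_update_last u hu hv]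

theorem det_parkingMatrix_eq_zero {k : ℕ} (u : Fin (k + 1) → ℕ) (hu : Monotone u)
    (h0 : u (Fin.last k) = 0) : (parkingMatrix u).det = 0 := by
  refine det_eq_zero_of_column_eq_zero 0 fun i => ?_
  have : u i.rev = 0 := Nat.eq_zero_of_le_zero (h0 ▸ hu (Fin.le_last _))
  simp [parkingMatrix, binomialRow, this]

theorem parkingCompletions_finite (u : Fin N → ℕ) : (parkingCompletions u).Finite :=
  (Set.finite_Icc 1 u).subset fun _ hc => ⟨fun i => (hc.2 i).1, fun i => (hc.2 i).2⟩

theorem parkingCompletions_eq_empty {k : ℕ} (u : Fin (k + 1) → ℕ) (h0 : u (Fin.last k) = 0) :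
    parkingCompletions u = ∅ :=
  Set.eq_empty_of_forall_notMem fun _ hc => by have := hc.2 (Fin.last k); omega

theorem parkingCompletions_eq_union {k v : ℕ} (u : Fin (k + 1) → ℕ) (hu : Monotone u)
    (hv : u (Fin.last k) = v + 1) :
    parkingCompletions u = parkingCompletions (fun i => min (u i) v) ∪
      (Fin.snoc · (v + 1)) '' parkingCompletions (Fin.init u) := by
  ext c
  constructor
  · rintro ⟨hc, hb⟩
    by_cases hlast : c (Fin.last k) ≤ v
    · exact Or.inl ⟨hc, fun i =>
        ⟨(hb i).1, le_min (hb i).2 ((hc (Fin.le_last i)).trans hlast)⟩⟩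
    · have hcl : c (Fin.last k) = v + 1 := by have := hb (Fin.last k); omega
      exact Or.inr ⟨Fin.init c, ⟨hc.comp Fin.strictMono_castSucc.monotone, fun i => hb _⟩,
        hcl ▸ Fin.snoc_init_self c⟩
  · rintro (⟨hc, hb⟩ | ⟨d, ⟨hd, hdb⟩, rfl⟩)
    · exact ⟨hc, fun i => ⟨(hb i).1, (hb i).2.trans (min_le_left _ _)⟩⟩
    · refine ⟨Fin.monotone_snoc hd fun i => (hdb i).2.trans (hv ▸ hu (Fin.le_last _)),
        fun i => ?_⟩
      cases i using Fin.lastCases with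
      | last => simp [hv]
      | cast i => simpa [Fin.init] using hdb i

theorem ncard_parkingCompletions_eq_min_add_init {k v : ℕ} (u : Fin (k + 1) → ℕ)
    (hu : Monotone u) (hv : u (Fin.last k) = v + 1) :
    (parkingCompletions u).ncard =
      (parkingCompletions fun i => min (u i) v).ncard +
        (parkingCompletions (Fin.init u)).ncard := by
  have hdisj : Disjoint (parkingCompletions fun i => min (u i) v)
      ((Fin.snoc · (v + 1)) '' parkingCompletions (Fin.init u)) := by
    refine Set.disjoint_left.2 fun c hc ⟨d, _, hdc⟩ => ?_
    have := (hc.2 (Fin.last k)).2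
    simp [← hdc] at this
  rw [parkingCompletions_eq_union u hu hv,
    Set.ncard_union_eq hdisj (parkingCompletions_finite _) ((parkingCompletions_finite _).image _),
    Set.ncard_image_of_injective _ (Fin.snoc_left_injective (α := fun _ => ℕ) _)]

theorem ncard_parkingCompletions_eq_det (u : Fin N → ℕ) (hu : Monotone u) :
    ((parkingCompletions u).ncard : ℤ) = (parkingMatrix u).det := by
  induction h : ∑ i, u i using Nat.strong_induction_on generalizing N with
  | _ S ih =>
    cases N with
    | zero =>
      have : parkingCompletions u = Set.univ :=
        Set.eq_univ_of_forall fun _ => ⟨fun a => a.elim0, fun i => i.elim0⟩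
      simp [this]
    | succ k =>
      rcases hv : u (Fin.last k) with _ | v
      · rw [parkingCompletions_eq_empty u hv, det_parkingMatrix_eq_zero u hu hv, Set.ncard_empty,
          Nat.cast_zero]
      · have hmin : ∑ i, min (u i) v < S := h ▸ Finset.sum_lt_sum (fun i _ => min_le_left _ _)
          ⟨Fin.last k, Finset.mem_univ _, by omega⟩
        have hinit : ∑ i, Fin.init u i < S := by
          rw [← h, Fin.sum_univ_castSucc u, hv]
          simp [Fin.init]
        rw [ncard_parkingCompletions_eq_min_add_init u hu hv,
          det_parkingMatrix_eq_min_add_init u hu hv, Nat.cast_add,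
          ih _ hmin _ (fun a b hab => min_le_min_right v (hu hab)) rfl,
          ih _ hinit (Fin.init u) (hu.comp Fin.strictMono_castSucc.monotone) rfl]

theorem stmt13_general (n m : ℕ) (u : Fin (n - m) → ℕ) (hu : StrictMono u) :
    (Nat.card {c : Fin (n - m) → ℕ | Monotone c ∧ ∀ i, 1 ≤ c i ∧ c i ≤ u i} : ℤ) =
      Matrix.det (Matrix.of fun i j : Fin (n - m) =>
        if j.1 ≤ i.1 + 1 then ((u i.rev).choose (i.1 + 1 - j.1) : ℤ) else 0) := by
  rw [Nat.card_coe_set_eq]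
  exact ncard_parkingCompletions_eq_det u hu.monotone

/-- Proposition 2.3 (Lindström–Gessel–Viennot): the number of increasing
parking completions of `t` in `[n]` equals the determinant of the
`(n-m) × (n-m)` matrix whose `(i,j)` entry (1-indexed) is
`binom(u_{n-m+1-i}, i-j+1)`, with the convention that the binomial vanishes
for negative lower index.  Here `u` is the increasing enumeration of
`[n] \ t`, and `Fin.rev i` encodes the index `n - m + 1 - i`. -/
theorem stmt13 (n m : ℕ) (t : Fin m → ℕ) (u : Fin (n - m) → ℕ)
    (ht : StrictMono t) (htm : ∀ i, t i ∈ Finset.Icc 1 n)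
    (hu : StrictMono u) (hum : ∀ j, u j ∈ Finset.Icc 1 n)
    (hcompl : ∀ x ∈ Finset.Icc 1 n, (∃ i, t i = x) ↔ ¬ ∃ j, u j = x) :
    (Nat.card {c : Fin (n - m) → ℕ | Monotone c ∧ ∀ i, 1 ≤ c i ∧ c i ≤ u i} : ℤ) =
      Matrix.det (Matrix.of fun i j : Fin (n - m) =>
        if j.1 ≤ i.1 + 1 then ((u i.rev).choose (i.1 + 1 - j.1) : ℤ) else 0) :=
  stmt13_general n m u hu
end
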